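/- arXiv:1706.05975 — 9 statements merged into one kernel-verified Lean document; each statement's English description precedes it below -/
import Mathlib

section
/- Let d ≥ 1 and let P be a finite set of at least d+2 points in ℝ^d. Then every point x in the convex hull of P lies in the convex hull of at least two distinct (d+1)-element subsets of P; that is, there exist subsets Q₁, Q₂ ⊆ P with Q₁ ≠ Q₂, |Q₁| = |Q₂| = d+1, x ∈ conv(Q₁) and x ∈ conv(Q₂). -/
/-!
By Carathéodory, `x` lies in the convex hull of an affinely independent subset of `P`, which has at
most `d + 1` points; enlarge it inside `P` to a set `Q₁` of exactly `d + 1` points. Any further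
point `p ∈ P` makes `Q₁ ∪ {p}` affinely dependent. Moving the barycentric weights of `x` along an
affine relation whose coefficient at `p` is nonpositive, until some weight vanishes, kills a point
of `Q₁` rather than `p`; what remains is a second set `Q₂ ∋ p` of `d + 1` points.
-/

open Finset Module

lemma AffineIndependent.finset_card_le_finrank_add_one {𝕜 E : Type*} [DivisionRing 𝕜]
    [AddCommGroup E] [Module 𝕜 E] [FiniteDimensional 𝕜 E] {t : Finset E}
    (ht : AffineIndependent 𝕜 ((↑) : t → E)) : #t ≤ finrank 𝕜 E + 1 := by
  simpa using ht.card_le_finrank_succ.trans (Nat.add_le_add_right (Submodule.finrank_le _) 1)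

section

variable {𝕜 E : Type*} [Field 𝕜] [LinearOrder 𝕜] [IsStrictOrderedRing 𝕜]
  [AddCommGroup E] [Module 𝕜 E] [DecidableEq E]

/-- The new weights are `w - c • g`, where `c = w i / g i` is minimal among the `e` with
`0 < g e`: this keeps them nonnegative and the barycentre fixed, and makes the weight of `i`
vanish. -/
lemma exists_pos_mem_convexHull_erase {s : Finset E} {w g : E → 𝕜}
    (hw₀ : ∀ e ∈ s, 0 ≤ w e) (hw₁ : ∑ e ∈ s, w e = 1)
    (hg : ∑ e ∈ s, g e • e = 0) (hg₀ : ∑ e ∈ s, g e = 0) (hpos : ∃ i ∈ s, 0 < g i) :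
    ∃ i ∈ s, 0 < g i ∧ ∑ e ∈ s, w e • e ∈ convexHull 𝕜 (↑(s.erase i) : Set E) := by
  obtain ⟨i, hi, hmin⟩ : ∃ i ∈ {e ∈ s | 0 < g e}, ∀ e ∈ {e ∈ s | 0 < g e}, w i / g i ≤ w e / g e :=
    exists_min_image _ _ (by simpa [Finset.Nonempty] using hpos)
  obtain ⟨his, hgi⟩ := mem_filter.1 hi
  set c := w i / g i
  have hc : 0 ≤ c := div_nonneg (hw₀ i his) hgi.le
  have hk : w i - c * g i = 0 := by simp [c, hgi.ne']
  refine ⟨i, his, hgi, mem_convexHull'.2 ⟨fun e => w e - c * g e, fun e he => ?_, ?_, ?_⟩⟩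
  · have he := mem_of_mem_erase he
    rw [sub_nonneg]
    rcases lt_or_ge 0 (g e) with hge | hge
    · exact (le_div_iff₀ hge).1 (hmin e (mem_filter.2 ⟨he, hge⟩))
    · exact (mul_nonpos_of_nonneg_of_nonpos hc hge).trans (hw₀ e he)
  · rw [sum_erase (f := fun e => w e - c * g e) _ hk, sum_sub_distrib, ← mul_sum, hg₀, hw₁,
      mul_zero, sub_zero]
  · rw [sum_erase _ (by simp only [hk, zero_smul])]
    simp only [sub_smul, mul_smul, sum_sub_distrib, ← smul_sum, hg, smul_zero, sub_zero]

lemma exists_mem_convexHull_insert_erase {t : Finset E} {p x : E} (hp : p ∉ t)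
    (hdep : ¬AffineIndependent 𝕜 ((↑) : ↥(insert p t : Finset E) → E))
    (hx : x ∈ convexHull 𝕜 (t : Set E)) :
    ∃ i ∈ t, x ∈ convexHull 𝕜 (↑((insert p t).erase i) : Set E) := by
  obtain ⟨w, hw₀, hw₁, rfl⟩ := mem_convexHull'.1 hx
  -- With `g p ≤ 0`, the point removed by `exists_pos_mem_convexHull_erase` cannot be `p`.
  obtain ⟨g, hg, hg₀, hgp, hne⟩ : ∃ g : E → 𝕜, ∑ e ∈ insert p t, g e • e = 0 ∧
      ∑ e ∈ insert p t, g e = 0 ∧ g p ≤ 0 ∧ ∃ e ∈ insert p t, g e ≠ 0 := by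
    obtain ⟨g, hg, hg₀, hne⟩ := exists_nontrivial_relation_sum_zero_of_not_affine_ind hdep
    rcases le_total (g p) 0 with hgp | hgp
    · exact ⟨g, hg, hg₀, hgp, hne⟩
    · exact ⟨-g, by simp [neg_smul, hg], by simp [hg₀], by simpa using hgp, by simpa using hne⟩
  have hw₀' : ∀ e ∈ insert p t, 0 ≤ Function.update w p 0 e := by
    intro e he
    rcases eq_or_ne e p with rfl | hep
    · simp
    · simpa [hep] using hw₀ e ((mem_insert.1 he).resolve_left hep)
  obtain ⟨i, hi, hgi, hx⟩ := exists_pos_mem_convexHull_erase hw₀'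
    (by simp [sum_insert hp, sum_update_of_notMem hp, hw₁]) hg hg₀
    (exists_pos_of_sum_zero_of_exists_nonzero g hg₀ hne)
  have hip : i ≠ p := by rintro rfl; exact hgp.not_gt hgi
  refine ⟨i, (mem_insert.1 hi).resolve_left hip, ?_⟩
  convert hx using 1
  rw [sum_insert hp, Function.update_self, zero_smul, zero_add]
  exact sum_congr rfl fun e he => by rw [Function.update_of_ne (ne_of_mem_of_not_mem he hp)]

end

theorem caratheodory_two_subsets_general (d : ℕ)
    (P : Finset (Fin d → ℝ)) (hP : d + 2 ≤ P.card)
    (x : Fin d → ℝ) (hx : x ∈ convexHull ℝ (P : Set (Fin d → ℝ))) :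
    ∃ Q₁ Q₂ : Finset (Fin d → ℝ), Q₁ ⊆ P ∧ Q₂ ⊆ P ∧ Q₁ ≠ Q₂ ∧
      Q₁.card = d + 1 ∧ Q₂.card = d + 1 ∧
      x ∈ convexHull ℝ (Q₁ : Set (Fin d → ℝ)) ∧
      x ∈ convexHull ℝ (Q₂ : Set (Fin d → ℝ)) := by
  classical
  rw [convexHull_eq_union] at hx
  simp only [Set.mem_iUnion, exists_prop] at hx
  obtain ⟨t, htP, hti, hxt⟩ := hx
  obtain ⟨Q₁, htQ₁, hQ₁P, hQ₁⟩ := exists_subsuperset_card_eq (coe_subset.1 htP)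
    (by simpa using hti.finset_card_le_finrank_add_one) (by omega : d + 1 ≤ #P)
  have hxQ₁ : x ∈ convexHull ℝ (Q₁ : Set (Fin d → ℝ)) := convexHull_mono (coe_subset.2 htQ₁) hxt
  obtain ⟨p, hpP, hpQ₁⟩ := exists_mem_notMem_of_card_lt_card (by omega : #Q₁ < #P)
  have hdep : ¬AffineIndependent ℝ ((↑) : ↥(insert p Q₁) → Fin d → ℝ) := fun h => by
    have := h.finset_card_le_finrank_add_one
    rw [card_insert_of_notMem hpQ₁, finrank_fin_fun] at this
    omega
  obtain ⟨i, hiQ₁, hxQ₂⟩ := exists_mem_convexHull_insert_erase hpQ₁ hdep hxQ₁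
  have hpQ₂ : p ∈ (insert p Q₁).erase i :=
    mem_erase.2 ⟨(ne_of_mem_of_not_mem hiQ₁ hpQ₁).symm, mem_insert_self p Q₁⟩
  refine ⟨Q₁, (insert p Q₁).erase i, hQ₁P, (erase_subset _ _).trans (insert_subset hpP hQ₁P),
    fun h => hpQ₁ (h ▸ hpQ₂), hQ₁, ?_, hxQ₁, hxQ₂⟩
  rw [card_erase_of_mem (mem_insert_of_mem hiQ₁), card_insert_of_notMem hpQ₁, hQ₁]
  rfl

/-- Every point in the convex hull of a finite set `P` of at least `d+2` points in `ℝ^d`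
lies in the convex hull of at least two distinct `(d+1)`-element subsets of `P`. -/
theorem caratheodory_two_subsets (d : ℕ) (hd : 1 ≤ d)
    (P : Finset (Fin d → ℝ)) (hP : d + 2 ≤ P.card)
    (x : Fin d → ℝ) (hx : x ∈ convexHull ℝ (P : Set (Fin d → ℝ))) :
    ∃ Q₁ Q₂ : Finset (Fin d → ℝ), Q₁ ⊆ P ∧ Q₂ ⊆ P ∧ Q₁ ≠ Q₂ ∧
      Q₁.card = d + 1 ∧ Q₂.card = d + 1 ∧
      x ∈ convexHull ℝ (Q₁ : Set (Fin d → ℝ)) ∧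
      x ∈ convexHull ℝ (Q₂ : Set (Fin d → ℝ)) :=
  caratheodory_two_subsets_general d P hP x hx
end

section
/- Colorful Carathéodory theorem: let C₁, C₂, …, C_{d+1} be subsets of ℝ^d and let p ∈ ℝ^d. If p lies in the convex hull of every C_i (i = 1, …, d+1), then there exist points x₁ ∈ C₁, x₂ ∈ C₂, …, x_{d+1} ∈ C_{d+1} such that p lies in the convex hull of {x₁, x₂, …, x_{d+1}}. -/
/-!
Bárány's argument. Shrink each `Cᵢ` to a finite set still having `p` in its hull, and among the
finitely many colorful choices `x` take one whose hull is nearest to `p`. If `p` is not in that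
hull, let `q` be its nearest point. The hyperplane through `q` orthogonal to `p - q` supports the
hull, so Carathéodory's theorem inside this `(d-1)`-dimensional hyperplane writes `q` as a convex
combination of at most `d` of the chosen points, missing some color `j`. Since `p ∈ conv Cⱼ`, some
`y ∈ Cⱼ` lies strictly on the side of `p`, and replacing `xⱼ` by `y` gives a hull containing `q`
and `y`, hence strictly nearer to `p`.
-/

open Set Metric Module
open scoped RealInnerProductSpace

lemma exists_range_subset_image_compl {α ι κ : Type*} [Fintype ι] [Fintype κ] {x : ι → α}
    {z : κ → α} (hzx : range z ⊆ range x) (hcard : Fintype.card κ < Fintype.card ι) :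
    ∃ j, range z ⊆ x '' {j}ᶜ := by
  choose g hg using fun k => hzx (mem_range_self k)
  obtain ⟨j, hj⟩ : ∃ j, ∀ k, g k ≠ j := by
    by_contra! hsurj
    exact (Fintype.card_le_of_surjective g hsurj).not_gt hcard
  refine ⟨j, ?_⟩
  rintro _ ⟨k, rfl⟩
  exact ⟨g k, hj k, hg k⟩

lemma AffineIndependent.card_le_finrank_of_apply_eq {k E κ : Type*} [Field k] [AddCommGroup E]
    [Module k E] [FiniteDimensional k E] [Fintype κ] {z : κ → E} (hz : AffineIndependent k z)
    {f : E →ₗ[k] k} (hf : f ≠ 0) {c : k} (hfz : ∀ i, f (z i) = c) :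
    Fintype.card κ ≤ finrank k E := by
  have hspan : vectorSpan k (range z) ≤ LinearMap.ker f := by
    rw [vectorSpan_def, Submodule.span_le]
    rintro _ ⟨_, ⟨i, rfl⟩, _, ⟨i', rfl⟩, rfl⟩
    simp [hfz]
  have hker : finrank k (LinearMap.ker f) < finrank k E :=
    Submodule.finrank_lt (by rwa [Ne, LinearMap.ker_eq_top])
  have := Submodule.finrank_mono hspan
  have := hz.card_le_finrank_succ
  omega

lemma exists_mem_convexHull_image_compl {E ι : Type*} [AddCommGroup E] [Module ℝ E]
    [FiniteDimensional ℝ E] [Fintype ι] (hι : finrank ℝ E < Fintype.card ι) {x : ι → E} {q : E}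
    (hq : q ∈ convexHull ℝ (range x)) {f : E →ₗ[ℝ] ℝ} (hf : f ≠ 0) (hfx : ∀ i, f (x i) ≤ f q) :
    ∃ j, q ∈ convexHull ℝ (x '' {j}ᶜ) := by
  obtain ⟨κ, _, z, w, hzx, hz, hw0, hw1, hwz⟩ := eq_pos_convex_span_of_mem_convexHull hq
  -- all weights are positive, so every `z i` lies on the supporting hyperplane `f = f q`
  have hfz : ∀ i, f (z i) = f q := by
    have hsum : ∑ i, w i * (f q - f (z i)) = 0 := calc
      _ = (∑ i, w i) * f q - f (∑ i, w i • z i) := by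
        simp [mul_sub, Finset.sum_sub_distrib, Finset.sum_mul]
      _ = 0 := by rw [hw1, hwz, one_mul, sub_self]
    have hnonneg : ∀ i ∈ Finset.univ, 0 ≤ w i * (f q - f (z i)) := fun i _ => by
      obtain ⟨i', hi'⟩ := hzx (mem_range_self i)
      exact mul_nonneg (hw0 i).le (sub_nonneg.2 (hi' ▸ hfx i'))
    intro i
    have := (Finset.sum_eq_zero_iff_of_nonneg hnonneg).1 hsum i (Finset.mem_univ i)
    linarith [(mul_eq_zero.1 this).resolve_left (hw0 i).ne']
  obtain ⟨j, hj⟩ := exists_range_subset_image_compl hzx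
    ((hz.card_le_finrank_of_apply_eq hf hfz).trans_lt hι)
  refine ⟨j, convexHull_mono hj ?_⟩
  rw [← hwz]
  exact (convex_convexHull ℝ _).sum_mem (fun i _ => (hw0 i).le) hw1
    fun i _ => subset_convexHull ℝ _ (mem_range_self i)

section InnerProductSpace

variable {F : Type*} [NormedAddCommGroup F] [InnerProductSpace ℝ F]

lemma exists_inner_sub_pos_of_mem_convexHull {s : Set F} {p q : F} (hp : p ∈ convexHull ℝ s)
    (hpq : p ≠ q) : ∃ y ∈ s, 0 < ⟪p - q, y - q⟫ := by
  obtain ⟨y, hy, hle⟩ := ((innerₗ F (p - q)).convexOn convex_univ).exists_ge_of_mem_convexHull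
    (subset_univ s) hp
  refine ⟨y, hy, ?_⟩
  have hpos : 0 < ⟪p - q, p - q⟫ := real_inner_self_pos.2 (sub_ne_zero.2 hpq)
  simp only [innerₗ_apply_apply] at hle
  rw [inner_sub_right] at hpos ⊢
  linarith

lemma infDist_eq_dist_iff_inner_le_zero {K : Set F} (hK : Convex ℝ K) {p q : F} (hq : q ∈ K) :
    infDist p K = dist p q ↔ ∀ w ∈ K, ⟪p - q, w - q⟫ ≤ 0 := by
  have : Nonempty K := ⟨⟨q, hq⟩⟩
  rw [← norm_eq_iInf_iff_real_inner_le_zero hK hq, infDist_eq_iInf, eq_comm]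
  simp only [dist_eq_norm]

variable [FiniteDimensional ℝ F] {ι : Type*} [Fintype ι] [DecidableEq ι]

lemma exists_update_infDist_lt (hι : finrank ℝ F < Fintype.card ι) {C : ι → Set F} {p : F}
    (hp : ∀ i, p ∈ convexHull ℝ (C i)) {x : ι → F} (hpx : p ∉ convexHull ℝ (range x)) :
    ∃ j, ∃ y ∈ C j, infDist p (convexHull ℝ (range (Function.update x j y))) <
      infDist p (convexHull ℝ (range x)) := by
  have : Nonempty ι := Fintype.card_pos_iff.1 (by omega)
  obtain ⟨q, hq, hpq⟩ := ((finite_range x).isCompact_convexHull (𝕜 := ℝ)).exists_infDist_eq_dist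
    ((range_nonempty x).convexHull (𝕜 := ℝ)) p
  have hsupp := (infDist_eq_dist_iff_inner_le_zero (convex_convexHull ℝ _) hq).1 hpq
  have hne : p ≠ q := fun h => hpx (h ▸ hq)
  have hf : innerₗ F (p - q) ≠ 0 := fun h =>
    hne <| sub_eq_zero.1 <| inner_self_eq_zero.1 <| LinearMap.congr_fun h (p - q)
  obtain ⟨j, hqj⟩ := exists_mem_convexHull_image_compl hι hq hf fun i => by
    have := hsupp (x i) (subset_convexHull ℝ _ (mem_range_self i))
    simp only [innerₗ_apply_apply]
    rw [inner_sub_right] at this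
    linarith
  obtain ⟨y, hy, hqy⟩ := exists_inner_sub_pos_of_mem_convexHull (hp j) hne
  refine ⟨j, y, hy, ?_⟩
  rw [hpq]
  set K' := convexHull ℝ (range (Function.update x j y))
  have hqK' : q ∈ K' := convexHull_mono (by
    rintro _ ⟨i, hi, rfl⟩
    exact ⟨i, Function.update_of_ne hi y x⟩) hqj
  have hyK' : y ∈ K' := subset_convexHull ℝ _ ⟨j, Function.update_self j y x⟩
  refine (infDist_le_dist_of_mem hqK').lt_of_ne fun h => ?_
  exact (hqy.trans_le ((infDist_eq_dist_iff_inner_le_zero (convex_convexHull ℝ _) hqK').1 h y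
    hyK')).false

theorem colorful_caratheodory_of_finset (hι : finrank ℝ F < Fintype.card ι) (C : ι → Finset F)
    {p : F} (hp : ∀ i, p ∈ convexHull ℝ (C i : Set F)) :
    ∃ x : ι → F, (∀ i, x i ∈ C i) ∧ p ∈ convexHull ℝ (range x) := by
  have hne : (Fintype.piFinset C).Nonempty := Fintype.piFinset_nonempty.2 fun i =>
    Finset.coe_nonempty.1 (convexHull_nonempty_iff.1 ⟨p, hp i⟩)
  obtain ⟨x, hxC, hmin⟩ :=
    (Fintype.piFinset C).exists_min_image (fun x => infDist p (convexHull ℝ (range x))) hne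
  rw [Fintype.mem_piFinset] at hxC
  refine ⟨x, hxC, by_contra fun hpx => ?_⟩
  obtain ⟨j, y, hy, hlt⟩ := exists_update_infDist_lt hι hp hpx
  refine (hmin _ (Fintype.mem_piFinset.2 fun i => ?_)).not_gt hlt
  rcases eq_or_ne i j with rfl | hij
  · simpa using hy
  · simpa [hij] using hxC i

end InnerProductSpace

theorem colorful_caratheodory_of_finrank_lt {E ι : Type*} [AddCommGroup E] [Module ℝ E]
    [FiniteDimensional ℝ E] [Fintype ι] (hι : finrank ℝ E < Fintype.card ι) (C : ι → Set E)
    (p : E) (hp : ∀ i, p ∈ convexHull ℝ (C i)) :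
    ∃ x : ι → E, (∀ i, x i ∈ C i) ∧ p ∈ convexHull ℝ (range x) := by
  classical
  let e := LinearEquiv.ofFinrankEq E (EuclideanSpace ℝ (Fin (finrank ℝ E)))
    finrank_euclideanSpace_fin.symm
  have hpD : ∀ i, ∃ D : Finset (EuclideanSpace ℝ (Fin (finrank ℝ E))),
      ↑D ⊆ e '' C i ∧ e p ∈ convexHull ℝ (D : Set _) := fun i => by
    have := mem_image_of_mem e (hp i)
    rw [← LinearEquiv.coe_coe, LinearMap.image_convexHull,
      convexHull_eq_union_convexHull_finite_subsets] at this
    simpa using this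
  choose D hDC hpD using hpD
  obtain ⟨x, hxD, hpx⟩ := colorful_caratheodory_of_finset (by simpa using hι) D hpD
  refine ⟨e.symm ∘ x, fun i => ?_, ?_⟩
  · obtain ⟨c, hc, hcx⟩ := hDC i (hxD i)
    simpa [← hcx] using hc
  · rw [range_comp, ← LinearEquiv.coe_coe, ← LinearMap.image_convexHull]
    exact ⟨e p, hpx, e.symm_apply_apply p⟩

/-- Colorful Carathéodory theorem: if a point `p` lies in the convex hull of each of
`d+1` sets `C 0, …, C d` in `ℝ^d`, then one can pick one point from each set so that
`p` lies in the convex hull of the chosen points. -/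
theorem colorful_caratheodory (d : ℕ) (C : Fin (d + 1) → Set (Fin d → ℝ))
    (p : Fin d → ℝ) (hp : ∀ i, p ∈ convexHull ℝ (C i)) :
    ∃ x : Fin (d + 1) → Fin d → ℝ, (∀ i, x i ∈ C i) ∧
      p ∈ convexHull ℝ (Set.range x) :=
  colorful_caratheodory_of_finrank_lt (by simp) C p hp
end

section
/- Let P ⊆ ℝ^d be a finite set of n points, let a be a point in the convex hull of P, and let r be an integer with 1 ≤ r ≤ d and r ≤ n. Then there exists a subset Q ⊆ P with |Q| = r such that the Euclidean distance from a to the convex hull of Q is at most diam(P)/√(2r), where diam(P) denotes the largest Euclidean distance between two points of P. -/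
/-!
Write `a = ∑ wᵢ pᵢ` and let `σ = ∑ wᵢ ‖pᵢ - a‖²` be the variance of this distribution.
Since the weighted mean of the `pᵢ - a` vanishes, `∑ⱼ wⱼ ‖v + (pⱼ - a)‖² = ‖v‖² + σ` for every `v`.
Taking `v = a - pᵢ` and averaging over `i` gives `2σ ≤ diam² P`. Taking `v = k (y - a)` shows that
from a point `y` with `k ‖y - a‖² ≤ σ` some `p ∈ P` leads to `y' = (k y + p) / (k + 1)` with
`(k + 1) ‖y' - a‖² ≤ σ`. Starting from `k = 0`, after `r` such greedy steps we reach a point in the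
convex hull of at most `r` points of `P` at squared distance at most `σ / r ≤ diam² P / (2r)` from `a`.
-/

open Finset Metric
open scoped RealInnerProductSpace

lemma Finset.exists_le_of_sum_mul_le {ι : Type*} {s : Finset ι} {w f : ι → ℝ}
    (hw₀ : ∀ i ∈ s, 0 ≤ w i) (hw₁ : ∑ i ∈ s, w i = 1) {c : ℝ} (h : ∑ i ∈ s, w i * f i ≤ c) :
    ∃ i ∈ s, f i ≤ c := by
  obtain ⟨i, hi, hfi⟩ := (concaveOn_id convex_univ).exists_le_of_centerMass hw₀
    (hw₁ ▸ one_pos) (fun i _ => Set.mem_univ (f i))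
  refine ⟨i, hi, hfi.trans ?_⟩
  simpa [centerMass_eq_of_sum_1 _ _ hw₁] using h

lemma sum_smul_sub_eq_zero {E : Type*} [AddCommGroup E] [Module ℝ E] {s : Finset E} {w : E → ℝ}
    {a : E} (hw₁ : ∑ i ∈ s, w i = 1) (ha : ∑ i ∈ s, w i • i = a) :
    ∑ i ∈ s, w i • (i - a) = 0 := by
  simp only [smul_sub, sum_sub_distrib, ha, ← sum_smul, hw₁, one_smul, sub_self]

section ConvexCombination

variable {E : Type*} [NormedAddCommGroup E] [InnerProductSpace ℝ E]
  {s : Finset E} {w : E → ℝ} {a : E}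

lemma sum_mul_norm_add_sub_sq (hw₁ : ∑ i ∈ s, w i = 1) (ha : ∑ i ∈ s, w i • i = a) (v : E) :
    ∑ i ∈ s, w i * ‖v + (i - a)‖ ^ 2 = ‖v‖ ^ 2 + ∑ i ∈ s, w i * ‖i - a‖ ^ 2 := by
  have hinner : ∑ i ∈ s, w i * ⟪v, i - a⟫ = 0 := by
    simp_rw [← real_inner_smul_right, ← inner_sum, sum_smul_sub_eq_zero hw₁ ha, inner_zero_right]
  simp_rw [norm_add_sq_real, mul_add, sum_add_distrib, ← sum_mul, hw₁, mul_left_comm _ (2 : ℝ),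
    ← mul_sum, hinner]
  ring

lemma two_mul_sum_mul_norm_sub_sq_le_diam_sq (hw₀ : ∀ i ∈ s, 0 ≤ w i) (hw₁ : ∑ i ∈ s, w i = 1)
    (ha : ∑ i ∈ s, w i • i = a) :
    2 * ∑ i ∈ s, w i * ‖i - a‖ ^ 2 ≤ diam (s : Set E) ^ 2 := by
  set σ := ∑ i ∈ s, w i * ‖i - a‖ ^ 2
  have hdist : ∀ i ∈ s, ‖i - a‖ ^ 2 + σ ≤ diam (s : Set E) ^ 2 := by
    intro i hi
    have hsum := sum_mul_norm_add_sub_sq hw₁ ha (a - i)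
    simp only [sub_add_sub_cancel', norm_sub_rev a i] at hsum
    rw [← hsum, ← one_mul (diam (s : Set E) ^ 2), ← hw₁, sum_mul]
    refine sum_le_sum fun j hj => mul_le_mul_of_nonneg_left ?_ (hw₀ j hj)
    rw [← dist_eq_norm]
    exact pow_le_pow_left₀ dist_nonneg
      (dist_le_diam_of_mem s.finite_toSet.isBounded (mem_coe.2 hj) (mem_coe.2 hi)) 2
  calc 2 * σ = ∑ i ∈ s, w i * (‖i - a‖ ^ 2 + σ) := by
        simp_rw [mul_add, sum_add_distrib, ← sum_mul, hw₁]
        ring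
    _ ≤ ∑ i ∈ s, w i * diam (s : Set E) ^ 2 :=
        sum_le_sum fun i hi => mul_le_mul_of_nonneg_left (hdist i hi) (hw₀ i hi)
    _ = diam (s : Set E) ^ 2 := by rw [← sum_mul, hw₁, one_mul]

lemma exists_mem_mul_norm_inv_smul_add_sub_sq_le (hw₀ : ∀ i ∈ s, 0 ≤ w i)
    (hw₁ : ∑ i ∈ s, w i = 1) (ha : ∑ i ∈ s, w i • i = a) {k : ℝ} (hk : 0 ≤ k) {y : E}
    (hy : k * ‖y - a‖ ^ 2 ≤ ∑ i ∈ s, w i * ‖i - a‖ ^ 2) :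
    ∃ p ∈ s, (k + 1) * ‖(k + 1)⁻¹ • (k • y + p) - a‖ ^ 2 ≤ ∑ i ∈ s, w i * ‖i - a‖ ^ 2 := by
  set σ := ∑ i ∈ s, w i * ‖i - a‖ ^ 2
  have hk₁ : 0 < k + 1 := by linarith
  have havg : ∑ i ∈ s, w i * ‖k • (y - a) + (i - a)‖ ^ 2 ≤ (k + 1) * σ := by
    rw [sum_mul_norm_add_sub_sq hw₁ ha, norm_smul, Real.norm_of_nonneg hk]
    nlinarith
  obtain ⟨p, hp, hle⟩ := exists_le_of_sum_mul_le hw₀ hw₁ havg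
  refine ⟨p, hp, ?_⟩
  have hdecomp : (k + 1)⁻¹ • (k • y + p) - a = (k + 1)⁻¹ • (k • (y - a) + (p - a)) := by
    have : k • y + p - (k + 1) • a = k • (y - a) + (p - a) := by
      rw [add_smul, one_smul, smul_sub]
      abel
    rw [← this, smul_sub, inv_smul_smul₀ hk₁.ne']
  rw [hdecomp, norm_smul, mul_pow, Real.norm_of_nonneg (inv_nonneg.2 hk₁.le), ← mul_assoc,
    inv_pow, sq, mul_inv, ← mul_assoc, mul_inv_cancel₀ hk₁.ne', one_mul, inv_mul_le_iff₀ hk₁]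
  exact hle

lemma inv_smul_add_mem_convexHull_insert {k : ℝ} (hk : 0 ≤ k) {Q : Set E} {y : E}
    (hy : y ∈ convexHull ℝ Q) (p : E) :
    (k + 1)⁻¹ • (k • y + p) ∈ convexHull ℝ (insert p Q) := by
  have hk₁ : 0 < k + 1 := by linarith
  rw [smul_add, smul_smul]
  exact convex_convexHull ℝ _ (convexHull_mono (Set.subset_insert p Q) hy)
    (subset_convexHull ℝ _ (Set.mem_insert p Q)) (by positivity) (by positivity)
    (by field_simp)

lemma exists_subset_card_le_mem_convexHull (hw₀ : ∀ i ∈ s, 0 ≤ w i) (hw₁ : ∑ i ∈ s, w i = 1)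
    (ha : ∑ i ∈ s, w i • i = a) (k : ℕ) :
    ∃ Q ⊆ s, #Q ≤ k + 1 ∧ ∃ y ∈ convexHull ℝ (Q : Set E),
      (k + 1 : ℝ) * ‖y - a‖ ^ 2 ≤ ∑ i ∈ s, w i * ‖i - a‖ ^ 2 := by
  classical
  induction k with
  | zero =>
    obtain ⟨p, hp, hle⟩ := exists_mem_mul_norm_inv_smul_add_sub_sq_le hw₀ hw₁ ha le_rfl (y := a)
      (by rw [zero_mul]; exact sum_nonneg fun i hi => mul_nonneg (hw₀ i hi) (sq_nonneg _))
    exact ⟨{p}, singleton_subset_iff.2 hp, by simp, p, subset_convexHull ℝ _ (by simp),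
      by simpa using hle⟩
  | succ k ih =>
    obtain ⟨Q, hQs, hQcard, y, hy, hle⟩ := ih
    obtain ⟨p, hp, hle'⟩ :=
      exists_mem_mul_norm_inv_smul_add_sub_sq_le hw₀ hw₁ ha (by positivity : (0 : ℝ) ≤ k + 1) hle
    refine ⟨insert p Q, insert_subset hp hQs, (card_insert_le p Q).trans (by omega), _,
      ?_, by push_cast; exact hle'⟩
    rw [coe_insert]
    exact inv_smul_add_mem_convexHull_insert (by positivity) hy p

end ConvexCombination

theorem close_caratheodory_general (d : ℕ) (P : Finset (EuclideanSpace ℝ (Fin d)))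
    (a : EuclideanSpace ℝ (Fin d))
    (ha : a ∈ convexHull ℝ (P : Set (EuclideanSpace ℝ (Fin d))))
    (r : ℕ) (hr1 : 1 ≤ r) (hrn : r ≤ P.card) :
    ∃ Q : Finset (EuclideanSpace ℝ (Fin d)), Q ⊆ P ∧ Q.card = r ∧
      Metric.infDist a (convexHull ℝ (Q : Set (EuclideanSpace ℝ (Fin d)))) ≤
        Metric.diam (P : Set (EuclideanSpace ℝ (Fin d))) / Real.sqrt (2 * r) := by
  rw [Finset.convexHull_eq] at ha
  obtain ⟨w, hw₀, hw₁, hcenter⟩ := ha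
  have hsum : ∑ i ∈ P, w i • i = a := by
    rw [← hcenter, centerMass_eq_of_sum_1 _ _ hw₁, Function.id_def]
  obtain ⟨k, rfl⟩ : ∃ k, r = k + 1 := ⟨r - 1, by omega⟩
  obtain ⟨Q, hQP, hQcard, y, hy, hle⟩ := exists_subset_card_le_mem_convexHull hw₀ hw₁ hsum k
  obtain ⟨Q', hQQ', hQ'P, hQ'card⟩ := exists_subsuperset_card_eq hQP hQcard hrn
  have hvar := two_mul_sum_mul_norm_sub_sq_le_diam_sq hw₀ hw₁ hsum
  refine ⟨Q', hQ'P, hQ'card, ?_⟩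
  have hpos : (0 : ℝ) < 2 * ↑(k + 1) := by positivity
  calc infDist a (convexHull ℝ (Q' : Set (EuclideanSpace ℝ (Fin d))))
      ≤ ‖y - a‖ := by
        rw [← dist_eq_norm, dist_comm]
        exact infDist_le_dist_of_mem (convexHull_mono (coe_subset.2 hQQ') hy)
    _ ≤ diam (P : Set (EuclideanSpace ℝ (Fin d))) / √(2 * ↑(k + 1)) := by
        rw [le_div_iff₀ (Real.sqrt_pos.2 hpos), ← Real.sqrt_sq (norm_nonneg (y - a)),
          ← Real.sqrt_mul (sq_nonneg _), ← Real.sqrt_sq diam_nonneg]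
        refine Real.sqrt_le_sqrt ?_
        push_cast at hle ⊢
        linarith

/-- Adiprasito–Bárány–Mustafa: for a finite point set `P ⊆ ℝ^d`, a point `a ∈ conv P`,
and `1 ≤ r ≤ d` with `r ≤ |P|`, there is an `r`-element subset `Q ⊆ P` whose convex hull
is within distance `diam P / √(2r)` of `a`. -/
theorem close_caratheodory (d : ℕ) (P : Finset (EuclideanSpace ℝ (Fin d)))
    (a : EuclideanSpace ℝ (Fin d))
    (ha : a ∈ convexHull ℝ (P : Set (EuclideanSpace ℝ (Fin d))))
    (r : ℕ) (hr1 : 1 ≤ r) (hrd : r ≤ d) (hrn : r ≤ P.card) :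
    ∃ Q : Finset (EuclideanSpace ℝ (Fin d)), Q ⊆ P ∧ Q.card = r ∧
      Metric.infDist a (convexHull ℝ (Q : Set (EuclideanSpace ℝ (Fin d)))) ≤
        Metric.diam (P : Set (EuclideanSpace ℝ (Fin d))) / Real.sqrt (2 * r) :=
  close_caratheodory_general d P a ha r hr1 hrn
end

section
/- Doignon's theorem (integer Helly theorem): let F be a finite family of convex subsets of ℝ^d. If every subfamily of F with at most 2^d members has a common point belonging to ℤ^d, then all members of F have a common point belonging to ℤ^d. -/
namespace DoignonProof

open Finset Set

section elim

variable {V : Type*} [AddCommGroup V] [Module ℝ V]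

lemma elim_two {B : Set V} {x w : V}
    (hne : w ≠ x)
    (hw : w ∈ convexHull ℝ (insert x B))
    (hx : x ∈ convexHull ℝ (insert w B))
    (hxB : x ∉ convexHull ℝ B) : False := by
  rcases B.eq_empty_or_nonempty with rfl | hB
  · have h1 : insert x (∅ : Set V) = {x} := by simp
    rw [h1, convexHull_singleton] at hw
    exact hne hw
  · rw [convexHull_insert hB, mem_convexJoin] at hw hx
    obtain ⟨x', hx', q, hq, hwseg⟩ := hw
    obtain ⟨w', hw', p, hp, hxseg⟩ := hx
    rw [Set.mem_singleton_iff] at hx' hw'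
    rw [hx'] at hwseg
    rw [hw'] at hxseg
    obtain ⟨c, e, hc, he, hce, hww⟩ := hwseg
    obtain ⟨a, b, ha, hb, hab, hxx⟩ := hxseg
    have hc1 : c ≤ 1 := by linarith
    have ha1 : a ≤ 1 := by linarith
    have hle : a * c ≤ 1 := by nlinarith
    have h1 : a • (c • x + e • q) + b • p = x := by rw [hww]; exact hxx
    rcases eq_or_lt_of_le hle with heq1 | hlt
    · have ha' : a = 1 := by nlinarith
      have hc' : c = 1 := by nlinarith
      have hb' : b = 0 := by linarith
      have he' : e = 0 := by linarith
      apply hne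
      have hthis : (1:ℝ) • x + (0:ℝ) • q = w := by rw [← hc', ← he']; exact hww
      simpa using hthis.symm
    · have hpos : (0:ℝ) < 1 - a * c := by linarith
      have key : (1 - a * c) • x = (a * e) • q + b • p := by
        linear_combination (norm := module) (-1 : ℝ) • h1
      have hsum : (a * e) + b = 1 - a * c := by
        have he2 : e = 1 - c := by linarith
        have hb2 : b = 1 - a := by linarith
        rw [he2, hb2]; ring
      have hx2 : ((1 - a*c)⁻¹ * (a * e)) • q + ((1 - a*c)⁻¹ * b) • p = x := by
        have hcong := congrArg (fun v : V => (1 - a*c)⁻¹ • v) key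
        simp only [smul_add, smul_smul] at hcong
        rw [inv_mul_cancel₀ hpos.ne', one_smul] at hcong
        exact hcong.symm
      apply hxB
      rw [← hx2]
      refine (convex_convexHull ℝ B) hq hp ?_ ?_ ?_
      · positivity
      · positivity
      · rw [← mul_add, hsum, inv_mul_cancel₀ hpos.ne']

lemma elim_one {A : Set V} {x u : V}
    (hx : x ∈ convexHull ℝ (insert ((1/2 : ℝ) • u + (1/2 : ℝ) • x) A)) :
    x ∈ convexHull ℝ (insert u A) := by
  rcases A.eq_empty_or_nonempty with rfl | hA
  · have h1 : insert ((1/2 : ℝ) • u + (1/2 : ℝ) • x) (∅ : Set V) = {(1/2 : ℝ) • u + (1/2 : ℝ) • x} := by simp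
    rw [h1, convexHull_singleton, Set.mem_singleton_iff] at hx
    have hxu : x = u := by
      have h2 : (1/2 : ℝ) • x = (1/2 : ℝ) • u := by
        linear_combination (norm := module) hx
      exact smul_right_injective V (by norm_num : (1/2 : ℝ) ≠ 0) h2
    rw [hxu]
    exact subset_convexHull ℝ _ (Set.mem_insert _ _)
  · rw [convexHull_insert hA, mem_convexJoin] at hx
    obtain ⟨m, hm, p, hp, hseg⟩ := hx
    rw [Set.mem_singleton_iff] at hm
    rw [hm] at hseg
    obtain ⟨a, b, ha, hb, hab, heq⟩ := hseg
    have ha1 : a ≤ 1 := by linarith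
    have hpos : (0:ℝ) < 1 - a/2 := by linarith
    have key : (1 - a/2) • x = (a/2) • u + b • p := by
      linear_combination (norm := module) (-1 : ℝ) • heq
    have hsum : (a/2) + b = 1 - a/2 := by linarith
    have hx2 : ((1 - a/2)⁻¹ * (a/2)) • u + ((1 - a/2)⁻¹ * b) • p = x := by
      have hcong := congrArg (fun v : V => (1 - a/2)⁻¹ • v) key
      simp only [smul_add, smul_smul] at hcong
      rw [inv_mul_cancel₀ hpos.ne', one_smul] at hcong
      exact hcong.symm
    have hu : u ∈ convexHull ℝ (insert u A) := subset_convexHull ℝ _ (Set.mem_insert _ _)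
    have hp' : p ∈ convexHull ℝ (insert u A) := convexHull_mono (Set.subset_insert _ _) hp
    rw [← hx2]
    refine (convex_convexHull ℝ (insert u A)) hu hp' ?_ ?_ ?_
    · positivity
    · positivity
    · rw [← mul_add, hsum, inv_mul_cancel₀ hpos.ne']

end elim


/-! ### Integer points and hulls -/

variable {d : ℕ}

/-- Embedding of integer vectors into real vectors. -/
def emb (d : ℕ) (z : Fin d → ℤ) : Fin d → ℝ := fun j => (z j : ℝ)

lemma emb_inj (d : ℕ) : Function.Injective (emb d) := by
  intro a b hab
  funext j
  have h := congrFun hab j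
  simp only [emb] at h
  exact_mod_cast h

/-- Convex hull of (the embedding of) a finite set of integer vectors. -/
def hullZ (Y : Finset (Fin d → ℤ)) : Set (Fin d → ℝ) := convexHull ℝ (emb d '' ↑Y)

lemma convex_hullZ (Y : Finset (Fin d → ℤ)) : Convex ℝ (hullZ Y) := convex_convexHull ℝ _

lemma mem_hullZ {Y : Finset (Fin d → ℤ)} {y : Fin d → ℤ} (h : y ∈ Y) : emb d y ∈ hullZ Y :=
  subset_convexHull ℝ _ ⟨y, by exact_mod_cast h, rfl⟩

lemma hullZ_subset {Y : Finset (Fin d → ℤ)} {C : Set (Fin d → ℝ)} (hC : Convex ℝ C)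
    (h : ∀ y ∈ Y, emb d y ∈ C) : hullZ Y ⊆ C := by
  apply convexHull_min _ hC
  rintro x ⟨y, hy, rfl⟩
  exact h y (by exact_mod_cast hy)

lemma hullZ_mono {S T : Finset (Fin d → ℤ)} (h : S ⊆ T) : hullZ S ⊆ hullZ T :=
  hullZ_subset (convex_hullZ T) (fun y hy => mem_hullZ (h hy))

lemma mid_mem_hullZ {Y : Finset (Fin d → ℤ)} {a b z : Fin d → ℤ}
    (ha : a ∈ Y) (hb : b ∈ Y)
    (hz : emb d z = (1/2 : ℝ) • emb d a + (1/2 : ℝ) • emb d b) :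
    emb d z ∈ hullZ Y := by
  rw [hz]
  exact (convex_hullZ Y) (mem_hullZ ha) (mem_hullZ hb) (by norm_num) (by norm_num) (by norm_num)

lemma lp_finite (Y : Finset (Fin d → ℤ)) : {v : Fin d → ℤ | emb d v ∈ hullZ Y}.Finite := by
  classical
  set B : ℕ := Y.sup (fun y => Finset.univ.sup fun j => (y j).natAbs) with hBdef
  have hBy : ∀ y ∈ Y, ∀ j, (y j).natAbs ≤ B := by
    intro y hy j
    refine le_trans ?_ (Finset.le_sup (f := fun y => Finset.univ.sup fun j => (y j).natAbs) hy)
    exact Finset.le_sup (f := fun j => (y j).natAbs) (Finset.mem_univ j)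
  have hbox : hullZ Y ⊆ Set.pi Set.univ (fun _ : Fin d => Set.Icc (-(B:ℝ)) (B:ℝ)) := by
    apply hullZ_subset
    · exact convex_pi (fun i _ => convex_Icc _ _)
    · intro y hy j _
      have h1 := hBy y hy j
      have h1' : |y j| ≤ (B:ℤ) := by
        rw [Int.abs_eq_natAbs]
        exact_mod_cast h1
      have h2 : |(y j : ℝ)| ≤ (B:ℝ) := by
        rw [← Int.cast_abs]
        exact_mod_cast h1'
      have h3 := abs_le.1 h2
      simp only [emb, Set.mem_Icc]
      exact h3
  have hfin : (Set.pi Set.univ (fun _ : Fin d => Set.Icc (-(B:ℤ)) (B:ℤ))).Finite :=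
    Set.Finite.pi fun _ => Set.finite_Icc _ _
  apply hfin.subset
  intro v hv
  intro j _
  have h3 := hbox hv j (Set.mem_univ j)
  simp only [emb, Set.mem_Icc] at h3
  rw [Set.mem_Icc]
  constructor
  · exact_mod_cast h3.1
  · exact_mod_cast h3.2

/-- Number of integer points in the hull. -/
noncomputable def lpcount (Y : Finset (Fin d → ℤ)) : ℕ :=
  {v : Fin d → ℤ | emb d v ∈ hullZ Y}.ncard

lemma lpcount_lt {S T : Finset (Fin d → ℤ)} (hsub : hullZ S ⊆ hullZ T)
    {y : Fin d → ℤ} (hyT : emb d y ∈ hullZ T) (hyS : emb d y ∉ hullZ S) :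
    lpcount S < lpcount T := by
  apply Set.ncard_lt_ncard _ (lp_finite T)
  rw [Set.ssubset_def]
  constructor
  · intro v hv
    exact hsub hv
  · intro hc
    exact hyS (hc hyT)

lemma exists_mid {a b : Fin d → ℤ}
    (hpar : (fun j => ((a j : ZMod 2))) = (fun j => ((b j : ZMod 2)))) :
    ∃ z : Fin d → ℤ, emb d z = (1/2 : ℝ) • emb d a + (1/2 : ℝ) • emb d b := by
  have hdvd : ∀ j, (2:ℤ) ∣ (a j + b j) := by
    intro j
    have h1 : ((a j : ℤ) : ZMod (2:ℕ)) = ((b j : ℤ) : ZMod (2:ℕ)) := congrFun hpar j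
    have h2 : a j ≡ b j [ZMOD ((2:ℕ):ℤ)] := (ZMod.intCast_eq_intCast_iff _ _ _).1 h1
    have h3 : ((2:ℕ):ℤ) ∣ (b j - a j) := Int.ModEq.dvd h2
    have h4 : (2:ℤ) ∣ (b j - a j) := by exact_mod_cast h3
    have h5 : a j + b j = (b j - a j) + 2 * (a j) := by ring
    rw [h5]
    exact dvd_add h4 ⟨a j, rfl⟩
  refine ⟨fun j => (a j + b j) / 2, ?_⟩
  funext j
  obtain ⟨k, hk⟩ := hdvd j
  have hzj : (a j + b j) / 2 = k := by
    rw [hk]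
    exact Int.mul_ediv_cancel_left k (by norm_num)
  have hkr : (a j : ℝ) + (b j : ℝ) = 2 * (k : ℝ) := by
    have : ((a j + b j : ℤ) : ℝ) = ((2 * k : ℤ) : ℝ) := by exact_mod_cast congrArg (fun t : ℤ => (t : ℝ)) hk
    push_cast at this
    linarith
  simp only [emb, Pi.add_apply, Pi.smul_apply, smul_eq_mul]
  rw [hzj]
  linarith


lemma mid_ne_left {a b z : Fin d → ℤ} (hne : a ≠ b)
    (hz : emb d z = (1/2 : ℝ) • emb d a + (1/2 : ℝ) • emb d b) : z ≠ a := by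
  intro h
  apply hne
  apply emb_inj d
  rw [h] at hz
  have h2 : (1/2 : ℝ) • emb d a = (1/2 : ℝ) • emb d b := by
    linear_combination (norm := module) hz
  exact smul_right_injective (Fin d → ℝ) (by norm_num : (1/2 : ℝ) ≠ 0) h2

lemma mid_ne_right {a b z : Fin d → ℤ} (hne : a ≠ b)
    (hz : emb d z = (1/2 : ℝ) • emb d a + (1/2 : ℝ) • emb d b) : z ≠ b := by
  intro h
  apply hne
  apply emb_inj d
  rw [h] at hz
  have h2 : (1/2 : ℝ) • emb d a = (1/2 : ℝ) • emb d b := by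
    linear_combination (norm := module) (-1 : ℝ) • hz
  exact smul_right_injective (Fin d → ℝ) (by norm_num : (1/2 : ℝ) ≠ 0) h2

lemma step (Y : Finset (Fin d → ℤ))
    (hcp : ∀ y ∈ Y, emb d y ∉ hullZ (Y.erase y))
    {yi yj z : Fin d → ℤ} (hyi : yi ∈ Y) (hyj : yj ∈ Y) (hne : yi ≠ yj)
    (hz : emb d z = (1/2 : ℝ) • emb d yi + (1/2 : ℝ) • emb d yj)
    (hzY : z ∉ Y)
    (hzi : emb d z ∉ hullZ (Y.erase yi))
    (ih : ∀ Y' : Finset (Fin d → ℤ), lpcount Y' < lpcount Y → Y'.card = Y.card →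
          ∃ w, ∀ y ∈ Y', emb d w ∈ hullZ (Y'.erase y)) :
    ∃ w, ∀ y ∈ Y, emb d w ∈ hullZ (Y.erase y) := by
  classical
  have hzne_i : z ≠ yi := mid_ne_left hne hz
  have hzne_j : z ≠ yj := mid_ne_right hne hz
  set Y₁ : Finset (Fin d → ℤ) := insert z (Y.erase yi) with hY₁
  have hzmemY : emb d z ∈ hullZ Y := mid_mem_hullZ hyi hyj hz
  have hzE : z ∉ Y.erase yi := fun hmem => hzY (Finset.mem_of_mem_erase hmem)
  have hsub1 : hullZ Y₁ ⊆ hullZ Y := by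
    apply hullZ_subset (convex_hullZ Y)
    intro s hs
    rw [hY₁] at hs
    rcases Finset.mem_insert.1 hs with rfl | hs'
    · exact hzmemY
    · exact mem_hullZ (Finset.mem_of_mem_erase hs')
  have himY : emb d '' ↑Y = insert (emb d yi) (emb d '' ↑(Y.erase yi)) := by
    conv_lhs => rw [← Finset.insert_erase hyi]
    rw [Finset.coe_insert, Set.image_insert_eq]
  have hyiY₁ : emb d yi ∉ hullZ Y₁ := by
    intro hmem
    have hmem' : emb d yi ∈ convexHull ℝ (insert (emb d z) (emb d '' ↑(Y.erase yi))) := by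
      simp only [hullZ, hY₁, Finset.coe_insert, Set.image_insert_eq] at hmem
      exact hmem
    have hw' : emb d z ∈ convexHull ℝ (insert (emb d yi) (emb d '' ↑(Y.erase yi))) := by
      rw [← himY]
      exact hzmemY
    exact elim_two (fun hh => hzne_i (emb_inj d hh)) hw' hmem' (hcp yi hyi)
  have hlt1 : lpcount Y₁ < lpcount Y := lpcount_lt hsub1 (mem_hullZ hyi) hyiY₁
  have hcard1 : Y₁.card = Y.card := by
    rw [hY₁, Finset.card_insert_of_notMem hzE, Finset.card_erase_of_mem hyi]
    have hpos : 0 < Y.card := Finset.card_pos.2 ⟨yi, hyi⟩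
    omega
  obtain ⟨w, hw⟩ := ih Y₁ hlt1 hcard1
  have T1 : emb d w ∈ hullZ (Y.erase yi) := by
    have h := hw z (by rw [hY₁]; exact Finset.mem_insert_self _ _)
    rwa [hY₁, Finset.erase_insert hzE] at h
  have T2 : ∀ l ∈ Y, l ≠ yi → l ≠ yj → emb d w ∈ hullZ (Y.erase l) := by
    intro l hl h1 h2
    have hlY₁ : l ∈ Y₁ := by
      rw [hY₁]; exact Finset.mem_insert_of_mem (Finset.mem_erase.2 ⟨h1, hl⟩)
    have h3 := hw l hlY₁
    refine (hullZ_subset (convex_hullZ (Y.erase l)) ?_) h3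
    intro s hs
    obtain ⟨hsl, hs'⟩ := Finset.mem_erase.1 hs
    rw [hY₁] at hs'
    rcases Finset.mem_insert.1 hs' with rfl | hs''
    · exact mid_mem_hullZ (Finset.mem_erase.2 ⟨Ne.symm h1, hyi⟩)
        (Finset.mem_erase.2 ⟨Ne.symm h2, hyj⟩) hz
    · exact mem_hullZ (Finset.mem_erase.2 ⟨hsl, Finset.mem_of_mem_erase hs''⟩)
  by_cases hwj : emb d w ∈ hullZ (Y.erase yj)
  · refine ⟨w, fun y hy => ?_⟩
    rcases eq_or_ne y yi with rfl | h1
    · exact T1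
    rcases eq_or_ne y yj with rfl | h2
    · exact hwj
    · exact T2 y hy h1 h2
  · have hyjY₁ : yj ∈ Y₁ := by
      rw [hY₁]; exact Finset.mem_insert_of_mem (Finset.mem_erase.2 ⟨Ne.symm hne, hyj⟩)
    have hwyj : w ≠ yj := by
      intro hwj'
      have h4 := hw yj hyjY₁
      rw [hwj'] at h4
      have h5 : emb d yj ∈ convexHull ℝ
          (insert ((1/2 : ℝ) • emb d yi + (1/2 : ℝ) • emb d yj)
            (emb d '' ↑((Y.erase yi).erase yj))) := by
        simp only [hullZ, hY₁, Finset.erase_insert_of_ne hzne_j,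
          Finset.coe_insert, Set.image_insert_eq] at h4
        rw [← hz]
        exact h4
      have h6 := elim_one h5
      apply hcp yj hyj
      have hsub2 : insert (emb d yi) (emb d '' ↑((Y.erase yi).erase yj))
          ⊆ emb d '' ↑(Y.erase yj) := by
        intro s hs
        rcases Set.mem_insert_iff.1 hs with rfl | ⟨t, ht, rfl⟩
        · exact ⟨yi, by exact_mod_cast Finset.mem_erase.2 ⟨hne, hyi⟩, rfl⟩
        · have ht' : t ∈ (Y.erase yi).erase yj := by exact_mod_cast ht
          obtain ⟨h7, h8⟩ := Finset.mem_erase.1 ht'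
          exact ⟨t, by exact_mod_cast Finset.mem_erase.2 ⟨h7, Finset.mem_of_mem_erase h8⟩, rfl⟩
      have h9 := convexHull_mono hsub2 h6
      simpa only [hullZ] using h9
    have hwY : w ∉ Y := by
      intro hwYmem
      by_cases h1 : w = yi
      · have T1' := T1
        rw [h1] at T1'
        exact hcp yi hyi T1'
      · by_cases h2 : w = yj
        · exact hwyj h2
        · exact hcp w hwYmem (T2 w hwYmem h1 h2)
    set Y₂ : Finset (Fin d → ℤ) := insert w (Y.erase yj) with hY₂
    have hwE : w ∉ Y.erase yj := fun hmem => hwY (Finset.mem_of_mem_erase hmem)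
    have hwmemY : emb d w ∈ hullZ Y := hullZ_mono (Finset.erase_subset _ _) T1
    have hsub3 : hullZ Y₂ ⊆ hullZ Y := by
      apply hullZ_subset (convex_hullZ Y)
      intro s hs
      rw [hY₂] at hs
      rcases Finset.mem_insert.1 hs with rfl | hs'
      · exact hwmemY
      · exact mem_hullZ (Finset.mem_of_mem_erase hs')
    have himYj : emb d '' ↑Y = insert (emb d yj) (emb d '' ↑(Y.erase yj)) := by
      conv_lhs => rw [← Finset.insert_erase hyj]
      rw [Finset.coe_insert, Set.image_insert_eq]
    have hyjY₂ : emb d yj ∉ hullZ Y₂ := by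
      intro hmem
      have hmem' : emb d yj ∈ convexHull ℝ (insert (emb d w) (emb d '' ↑(Y.erase yj))) := by
        simp only [hullZ, hY₂, Finset.coe_insert, Set.image_insert_eq] at hmem
        exact hmem
      have hw' : emb d w ∈ convexHull ℝ (insert (emb d yj) (emb d '' ↑(Y.erase yj))) := by
        rw [← himYj]
        exact hwmemY
      exact elim_two (fun hh => hwyj (emb_inj d hh)) hw' hmem' (hcp yj hyj)
    have hlt2 : lpcount Y₂ < lpcount Y := lpcount_lt hsub3 (mem_hullZ hyj) hyjY₂
    have hcard2 : Y₂.card = Y.card := by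
      rw [hY₂, Finset.card_insert_of_notMem hwE, Finset.card_erase_of_mem hyj]
      have hpos : 0 < Y.card := Finset.card_pos.2 ⟨yi, hyi⟩
      omega
    obtain ⟨v, hv⟩ := ih Y₂ hlt2 hcard2
    refine ⟨v, fun y hy => ?_⟩
    rcases eq_or_ne y yj with rfl | hyne
    · have h8 := hv w (by rw [hY₂]; exact Finset.mem_insert_self _ _)
      rwa [hY₂, Finset.erase_insert hwE] at h8
    · have hyY₂ : y ∈ Y₂ := by
        rw [hY₂]; exact Finset.mem_insert_of_mem (Finset.mem_erase.2 ⟨hyne, hy⟩)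
      have h8 := hv y hyY₂
      refine (hullZ_subset (convex_hullZ (Y.erase y)) ?_) h8
      intro s hs
      obtain ⟨hsy, hs'⟩ := Finset.mem_erase.1 hs
      rw [hY₂] at hs'
      rcases Finset.mem_insert.1 hs' with rfl | hs''
      · rcases eq_or_ne y yi with rfl | hyi'
        · exact T1
        · exact T2 y hy hyi' hyne
      · exact mem_hullZ (Finset.mem_erase.2 ⟨hsy, Finset.mem_of_mem_erase hs''⟩)

lemma core (d : ℕ) : ∀ (N : ℕ) (Y : Finset (Fin d → ℤ)), lpcount Y ≤ N → 2 ^ d + 1 ≤ Y.card →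
    ∃ w : Fin d → ℤ, ∀ y ∈ Y, emb d w ∈ hullZ (Y.erase y) := by
  intro N
  induction N using Nat.strong_induction_on with
  | _ N IH =>
  intro Y hN hcard
  classical
  by_cases hcp' : ∃ y ∈ Y, emb d y ∈ hullZ (Y.erase y)
  · obtain ⟨y₀, hy₀, hmem⟩ := hcp'
    refine ⟨y₀, fun y hy => ?_⟩
    rcases eq_or_ne y y₀ with rfl | hne
    · exact hmem
    · exact mem_hullZ (Finset.mem_erase.2 ⟨Ne.symm hne, hy₀⟩)
  · push_neg at hcp'
    have hcard2 : (Finset.univ : Finset (Fin d → ZMod 2)).card < Y.card := by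
      rw [Finset.card_univ]
      have he : Fintype.card (Fin d → ZMod 2) = 2 ^ d := by
        rw [Fintype.card_fun, ZMod.card, Fintype.card_fin]
      rw [he]
      exact lt_of_lt_of_le (Nat.lt_succ_self _) hcard
    obtain ⟨yi, hyi, yj, hyj, hne, hpar⟩ :=
      Finset.exists_ne_map_eq_of_card_lt_of_maps_to hcard2
        (fun y _ => Finset.mem_univ (fun j => ((y j : ZMod 2))))
    obtain ⟨z, hz⟩ := exists_mid hpar
    have hzne_i : z ≠ yi := mid_ne_left hne hz
    have hzne_j : z ≠ yj := mid_ne_right hne hz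
    have hzY : z ∉ Y := by
      intro hzmem
      exact hcp' z hzmem (mid_mem_hullZ (Finset.mem_erase.2 ⟨Ne.symm hzne_i, hyi⟩)
        (Finset.mem_erase.2 ⟨Ne.symm hzne_j, hyj⟩) hz)
    have ihc : ∀ Y' : Finset (Fin d → ℤ), lpcount Y' < lpcount Y → Y'.card = Y.card →
        ∃ w, ∀ y ∈ Y', emb d w ∈ hullZ (Y'.erase y) := by
      intro Y' hlt hc
      exact IH (lpcount Y') (lt_of_lt_of_le hlt hN) Y' le_rfl (by rw [hc]; exact hcard)
    by_cases hzi : emb d z ∈ hullZ (Y.erase yi)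
    · by_cases hzj : emb d z ∈ hullZ (Y.erase yj)
      · refine ⟨z, fun y hy => ?_⟩
        rcases eq_or_ne y yi with rfl | h1
        · exact hzi
        rcases eq_or_ne y yj with rfl | h2
        · exact hzj
        · exact mid_mem_hullZ (Finset.mem_erase.2 ⟨Ne.symm h1, hyi⟩)
            (Finset.mem_erase.2 ⟨Ne.symm h2, hyj⟩) hz
      · have hz' : emb d z = (1/2 : ℝ) • emb d yj + (1/2 : ℝ) • emb d yi := by
          rw [hz]; module
        exact step Y hcp' hyj hyi (Ne.symm hne) hz' hzY hzj ihc
    · exact step Y hcp' hyi hyj hne hz hzY hzi ihc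


end DoignonProof

/-- Doignon's theorem (integer Helly theorem): if every subfamily of at most `2^d`
members of a finite family of convex sets in `ℝ^d` has a common integer point, then the
whole family has a common integer point. -/
theorem doignon_integer_helly (d : ℕ) {ι : Type} [Fintype ι]
    (F : ι → Set (Fin d → ℝ)) (hconv : ∀ i, Convex ℝ (F i))
    (h : ∀ G : Finset ι, G.card ≤ 2 ^ d →
      ∃ z : Fin d → ℤ, ∀ i ∈ G, (fun j => (z j : ℝ)) ∈ F i) :
    ∃ z : Fin d → ℤ, ∀ i, (fun j => (z j : ℝ)) ∈ F i := by
  classical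
  open DoignonProof in
  have main : ∀ G : Finset ι, ∃ z : Fin d → ℤ, ∀ i ∈ G, DoignonProof.emb d z ∈ F i := by
    intro G
    induction G using Finset.strongInduction with
    | _ G IH =>
      by_cases hle : G.card ≤ 2 ^ d
      · obtain ⟨z, hz⟩ := h G hle
        exact ⟨z, hz⟩
      · push_neg at hle
        have hwit : ∀ i : ι, ∃ z : Fin d → ℤ, i ∈ G → ∀ k ∈ G.erase i,
            DoignonProof.emb d z ∈ F k := by
          intro i
          by_cases hi : i ∈ G
          · obtain ⟨z, hz⟩ := IH (G.erase i) (Finset.erase_ssubset hi)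
            exact ⟨z, fun _ => hz⟩
          · exact ⟨0, fun hi' => absurd hi' hi⟩
        choose w hw using hwit
        by_cases hrep : ∃ i ∈ G, ∃ j ∈ G, i ≠ j ∧ w i = w j
        · obtain ⟨i, hi, j, hj, hij, hwij⟩ := hrep
          refine ⟨w i, fun k hk => ?_⟩
          by_cases hki : k = i
          · subst hki
            have h1 := hw j hj k (Finset.mem_erase.2 ⟨hij, hk⟩)
            rwa [← hwij] at h1
          · exact hw i hi k (Finset.mem_erase.2 ⟨hki, hk⟩)
        · push_neg at hrep
          have hinj : Set.InjOn w ↑G := by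
            intro a ha b hb hab
            by_contra hne
            exact hrep a (by exact_mod_cast ha) b (by exact_mod_cast hb) hne hab
          set Y : Finset (Fin d → ℤ) := G.image w with hY
          have hYcard : Y.card = G.card := Finset.card_image_of_injOn hinj
          have hY2 : 2 ^ d + 1 ≤ Y.card := by rw [hYcard]; exact hle
          obtain ⟨u, hu⟩ := DoignonProof.core d (DoignonProof.lpcount Y) Y le_rfl hY2
          refine ⟨u, fun i hi => ?_⟩
          have h1 : DoignonProof.emb d u ∈ DoignonProof.hullZ (Y.erase (w i)) :=
            hu (w i) (by rw [hY]; exact Finset.mem_image_of_mem w hi)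
          refine (DoignonProof.hullZ_subset (hconv i) ?_) h1
          intro s hs
          obtain ⟨hsne, hsY⟩ := Finset.mem_erase.1 hs
          rw [hY] at hsY
          obtain ⟨k, hk, rfl⟩ := Finset.mem_image.1 hsY
          have hki : k ≠ i := fun hh => hsne (by rw [hh])
          exact hw k hk i (Finset.mem_erase.2 ⟨Ne.symm hki, hi⟩)
  obtain ⟨z, hz⟩ := main Finset.univ
  exact ⟨z, fun i => hz i (Finset.mem_univ i)⟩
end

section
/- Mixed Helly theorem: let d, k ≥ 0 and let F be a finite family of convex subsets of ℝ^{d+k} of cardinality at least (d+1)·2^k. If every (d+1)·2^k members of F have a common point whose last k coordinates are integers, then all members of F have a common point whose last k coordinates are integers. -/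
/-!
Project to the integer coordinates. For a `(d+1)`-element subfamily `S` the projection `D S` of
`⋂ i ∈ S, F i` to `ℝ^k` is convex, and any `2^k` of the sets `D S` involve at most `(d+1)·2^k`
members of `F`, so they share an integer point. Doignon's theorem (Helly's theorem for integer
points, with Helly number `2^k`) gives an integer `u` lying in every `D S`, and Helly's theorem in
`ℝ^d`, applied to the fibres `{v | (v, u) ∈ F i}`, gives the common point `(v, u)`.

Doignon's theorem follows from its Radon-type lemma just as Helly's theorem follows from Radon's:
among more than `2^k` integer points `Y c` there is an integer point lying in the convex hull of
`Y l, l ≠ c`, for every `c`. This is proved by descent on the number of integer points of the hull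
of all the `Y c`. If no `Y c` lies in the hull of the others, two of them, `Y i` and `Y j`, agree
modulo `2`. Replacing `Y i` by their integral midpoint strictly decreases that number, and the point
`t` given by induction serves for every `c ≠ j`; if it fails for `j`, then `t ≠ Y j`, and replacing
`Y j` by `t` decreases the number again and yields a point that serves for all `c`.
-/

open Set
open scoped Finset

def intLattice (k : ℕ) : Set (Fin k → ℝ) := {p | ∀ j, ∃ m : ℤ, p j = m}

lemma Bornology.IsBounded.finite_inter_intLattice {k : ℕ} {s : Set (Fin k → ℝ)}
    (hs : Bornology.IsBounded s) : (s ∩ intLattice k).Finite := by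
  convert ZSpan.setFinite_inter (Pi.basisFun ℝ (Fin k)) hs using 2
  ext p
  simp [Module.Basis.mem_span_iff_repr_mem, intLattice, eq_comm]

lemma exists_ne_midpoint_mem_intLattice {ι : Type*} [Fintype ι] {k : ℕ}
    (hcard : 2 ^ k < Fintype.card ι) {Y : ι → Fin k → ℝ} (hY : ∀ c, Y c ∈ intLattice k) :
    ∃ i j, i ≠ j ∧ midpoint ℝ (Y i) (Y j) ∈ intLattice k := by
  choose a ha using hY
  obtain ⟨i, j, hij, hparity⟩ := Fintype.exists_ne_map_eq_of_card_lt
    (fun c l => Even (a c l)) (by simpa [Fintype.card_prop] using hcard)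
  refine ⟨i, j, hij, fun l => ?_⟩
  obtain ⟨m, hm⟩ := Int.even_add.2 (iff_of_eq (congrFun hparity l))
  refine ⟨m, ?_⟩
  have : (a i l : ℝ) + a j l = m + m := by exact_mod_cast hm
  simp only [midpoint_eq_smul_add, Pi.smul_apply, Pi.add_apply, ha, smul_eq_mul, invOf_eq_inv]
  linarith

theorem Set.image_update_subset_insert {α β : Type*} [DecidableEq α] (f : α → β) (a : α) (b : β)
    (s : Set α) : Function.update f a b '' s ⊆ insert b (f '' (s \ {a})) := by
  rintro _ ⟨l, hl, rfl⟩
  by_cases hla : l = a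
  · subst hla
    rw [Function.update_self]
    exact mem_insert _ _
  · rw [Function.update_of_ne hla]
    exact mem_insert_of_mem _ ⟨l, ⟨hl, hla⟩, rfl⟩

section Hull

variable {𝕜 E ι : Type*} [Semiring 𝕜] [PartialOrder 𝕜] [AddCommMonoid E] [Module 𝕜 E]
  {Y : ι → E} {j : ι} {w : E}

theorem mem_convexHull_image_compl_of_mem_self {c : ι} (hc : Y c ∈ convexHull 𝕜 (Y '' {c}ᶜ))
    (l : ι) : Y c ∈ convexHull 𝕜 (Y '' {l}ᶜ) := by
  rcases eq_or_ne l c with rfl | hlc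
  · exact hc
  · exact subset_convexHull 𝕜 _ ⟨c, Ne.symm hlc, rfl⟩

theorem convexHull_image_update_compl_subset [DecidableEq ι] {c : ι}
    (hw : c ≠ j → w ∈ convexHull 𝕜 (Y '' {c}ᶜ)) :
    convexHull 𝕜 (Function.update Y j w '' {c}ᶜ) ⊆ convexHull 𝕜 (Y '' {c}ᶜ) := by
  refine convexHull_min ?_ (convex_convexHull 𝕜 _)
  rintro _ ⟨l, hlc, rfl⟩
  by_cases hlj : l = j
  · subst hlj
    rw [Function.update_self]
    exact hw (Ne.symm hlc)
  · rw [Function.update_of_ne hlj]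
    exact subset_convexHull 𝕜 _ ⟨l, hlc, rfl⟩

theorem convexHull_range_update_subset [DecidableEq ι] (hw : w ∈ convexHull 𝕜 (range Y)) :
    convexHull 𝕜 (range (Function.update Y j w)) ⊆ convexHull 𝕜 (range Y) := by
  refine convexHull_min ?_ (convex_convexHull 𝕜 _)
  rintro _ ⟨l, rfl⟩
  by_cases hlj : l = j
  · subst hlj
    rwa [Function.update_self]
  · rw [Function.update_of_ne hlj]
    exact subset_convexHull 𝕜 _ (mem_range_self l)

end Hull

section Exchange

variable {𝕜 E : Type*} [Field 𝕜] [LinearOrder 𝕜] [IsStrictOrderedRing 𝕜]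
  [AddCommGroup E] [Module 𝕜 E]

theorem mem_convexHull_of_mem_convexHull_insert_of_mem_convexHull_insert {A : Set E} {x w : E}
    (hx : x ∈ convexHull 𝕜 (insert w A)) (hw : w ∈ convexHull 𝕜 (insert x A)) (hwx : w ≠ x) :
    x ∈ convexHull 𝕜 A := by
  rcases A.eq_empty_or_nonempty with rfl | hA
  · simp only [insert_empty_eq, convexHull_singleton, mem_singleton_iff] at hw
    exact absurd hw hwx
  rw [convexHull_insert hA, mem_convexJoin] at hx hw
  obtain ⟨w', hw', u, hu, μ, ν, hμ, hν, hμν, hx⟩ := hx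
  obtain ⟨x', hx', v, hv, lam, κ, hlam, hκ, hlamκ, hw⟩ := hw
  rw [mem_singleton_iff] at hw' hx'
  subst w' x'
  have hcomb : (μ * κ + ν) • x = (μ * κ) • v + ν • u := by
    have : x = μ • (lam • x + κ • v) + ν • u := by rw [hw, hx]
    linear_combination (norm := module) this + (μ • hlamκ + hμν) • x
  have hpos : 0 < μ * κ + ν := by
    refine lt_of_le_of_ne (by positivity) fun h => hwx ?_
    have hκ0 : κ = 0 := by nlinarith
    rw [← hw, hκ0, zero_smul, add_zero, (by linarith : lam = 1), one_smul]
  convert (convex_iff_div.1 (convex_convexHull 𝕜 A)) hv hu (by positivity) hν hpos using 1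
  rw [div_eq_inv_mul, div_eq_inv_mul, mul_smul _ (μ * κ), mul_smul _ ν, ← smul_add, ← hcomb,
    inv_smul_smul₀ hpos.ne']

variable {ι : Type*} {Y : ι → E} {j : ι} {w : E}

theorem notMem_convexHull_insert_image_compl (hYj : Y j ∉ convexHull 𝕜 (Y '' {j}ᶜ))
    (hw : w ∈ convexHull 𝕜 (range Y)) (hwj : w ≠ Y j) :
    Y j ∉ convexHull 𝕜 (insert w (Y '' {j}ᶜ)) := fun h =>
  hYj <| mem_convexHull_of_mem_convexHull_insert_of_mem_convexHull_insert h
    (by rwa [insert_image_compl_eq_range]) hwj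

theorem notMem_convexHull_range_update [DecidableEq ι] (hYj : Y j ∉ convexHull 𝕜 (Y '' {j}ᶜ))
    (hw : w ∈ convexHull 𝕜 (range Y)) (hwj : w ≠ Y j) :
    Y j ∉ convexHull 𝕜 (range (Function.update Y j w)) := by
  have hrange := image_update_subset_insert Y j w univ
  rw [image_univ, ← compl_eq_univ_sdiff] at hrange
  exact fun h => notMem_convexHull_insert_image_compl hYj hw hwj (convexHull_mono hrange h)

end Exchange

theorem ncard_convexHull_range_update_inter_intLattice_lt {ι : Type*} [Finite ι] [DecidableEq ι]
    {k : ℕ} {Y : ι → Fin k → ℝ} {j : ι} {w : Fin k → ℝ} (hYj : Y j ∈ intLattice k)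
    (hYj' : Y j ∉ convexHull ℝ (Y '' {j}ᶜ)) (hw : w ∈ convexHull ℝ (range Y)) (hwj : w ≠ Y j) :
    (convexHull ℝ (range (Function.update Y j w)) ∩ intLattice k).ncard <
      (convexHull ℝ (range Y) ∩ intLattice k).ncard := by
  refine ncard_lt_ncard ?_
    (isBounded_convexHull.2 (finite_range Y).isBounded).finite_inter_intLattice
  refine (ssubset_iff_of_subset (inter_subset_inter_left _ (convexHull_range_update_subset hw))).2
    ⟨Y j, ⟨subset_convexHull ℝ _ (mem_range_self j), hYj⟩, fun h => ?_⟩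
  exact notMem_convexHull_range_update hYj' hw hwj h.1

theorem exists_mem_intLattice_forall_mem_convexHull_image_compl {ι : Type*} [Fintype ι]
    [DecidableEq ι] {k : ℕ} (hcard : 2 ^ k < Fintype.card ι) (Y : ι → Fin k → ℝ)
    (hY : ∀ c, Y c ∈ intLattice k) :
    ∃ t ∈ intLattice k, ∀ c, t ∈ convexHull ℝ (Y '' {c}ᶜ) := by
  induction hN : (convexHull ℝ (range Y) ∩ intLattice k).ncard using Nat.strong_induction_on
    generalizing Y with
  | _ N ih =>
  by_cases hdep : ∃ c, Y c ∈ convexHull ℝ (Y '' {c}ᶜ)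
  · obtain ⟨c, hc⟩ := hdep
    exact ⟨Y c, hY c, mem_convexHull_image_compl_of_mem_self hc⟩
  push Not at hdep
  obtain ⟨i, j, hij, hz⟩ := exists_ne_midpoint_mem_intLattice hcard hY
  set z := midpoint ℝ (Y i) (Y j)
  have hYij : Y i ≠ Y j := fun h => hdep i (h ▸ subset_convexHull ℝ _ ⟨j, hij.symm, rfl⟩)
  have hz_range : z ∈ convexHull ℝ (range Y) :=
    segment_subset_convexHull (mem_range_self i) (mem_range_self j) (midpoint_mem_segment _ _)
  have hz_mem : ∀ c, c ≠ i → c ≠ j → z ∈ convexHull ℝ (Y '' {c}ᶜ) := fun c hci hcj =>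
    (convex_convexHull ℝ (Y '' {c}ᶜ)).segment_subset (subset_convexHull ℝ _ ⟨i, hci.symm, rfl⟩)
      (subset_convexHull ℝ _ ⟨j, hcj.symm, rfl⟩) (midpoint_mem_segment _ _)
  obtain ⟨t, ht, ht_mem⟩ := ih _ (hN ▸ ncard_convexHull_range_update_inter_intLattice_lt (hY i)
    (hdep i) hz_range ((midpoint_eq_left_iff ℝ).not.2 hYij)) (Function.update Y i z)
    ((Function.forall_update_iff Y fun _ v => v ∈ intLattice k).2 ⟨hz, fun c _ => hY c⟩) rfl
  have ht_ne : ∀ c, c ≠ j → t ∈ convexHull ℝ (Y '' {c}ᶜ) := fun c hcj =>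
    convexHull_image_update_compl_subset (fun hci => hz_mem c hci hcj) (ht_mem c)
  by_cases htj : t ∈ convexHull ℝ (Y '' {j}ᶜ)
  · exact ⟨t, ht, fun c => (eq_or_ne c j).elim (fun hcj => hcj ▸ htj) (ht_ne c)⟩
  have htYj : t ≠ Y j := by
    rintro rfl
    refine notMem_convexHull_insert_image_compl (hdep j) hz_range
      ((midpoint_eq_right_iff ℝ).not.2 hYij) (convexHull_mono ?_ (ht_mem j))
    exact (image_update_subset_insert Y i z _).trans
      (insert_subset_insert (image_mono sdiff_subset))
  have ht_range : t ∈ convexHull ℝ (range Y) :=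
    convexHull_mono (image_subset_range _ _) (ht_ne i hij)
  obtain ⟨t', ht', ht'_mem⟩ := ih _ (hN ▸ ncard_convexHull_range_update_inter_intLattice_lt (hY j)
    (hdep j) ht_range htYj) (Function.update Y j t)
    ((Function.forall_update_iff Y fun _ v => v ∈ intLattice k).2 ⟨ht, fun c _ => hY c⟩) rfl
  exact ⟨t', ht', fun c => convexHull_image_update_compl_subset (ht_ne c) (ht'_mem c)⟩

theorem Convex.helly_of_radon {ι 𝕜 E : Type*} [Semiring 𝕜] [PartialOrder 𝕜] [AddCommMonoid E]
    [Module 𝕜 E] {X : Set E} {h : ℕ}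
    (radon : ∀ (s : Finset ι) (Y : s → E), h < #s → (∀ c, Y c ∈ X) →
      ∃ t ∈ X, ∀ c, t ∈ convexHull 𝕜 (Y '' {c}ᶜ))
    {F : ι → Set E} (hF : ∀ i, Convex 𝕜 (F i)) (s : Finset ι)
    (hs : ∀ I ⊆ s, #I ≤ h → ∃ p ∈ X, ∀ i ∈ I, p ∈ F i) :
    ∃ p ∈ X, ∀ i ∈ s, p ∈ F i := by
  classical
  induction s using Finset.strongInduction with
  | H s ih =>
  by_cases hsmall : #s ≤ h
  · exact hs s subset_rfl hsmall
  have hY : ∀ c : s, ∃ y ∈ X, ∀ i ∈ s.erase c, y ∈ F i := fun c =>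
    ih _ (Finset.erase_ssubset c.2) fun I hI => hs I (hI.trans (Finset.erase_subset _ _))
  choose Y hYX hYF using hY
  obtain ⟨t, htX, ht⟩ := radon s Y (not_le.1 hsmall) hYX
  refine ⟨t, htX, fun i hi => convexHull_min ?_ (hF i) (ht ⟨i, hi⟩)⟩
  rintro _ ⟨c, hc, rfl⟩
  exact hYF c i (Finset.mem_erase.2 ⟨fun h => hc (Subtype.ext h).symm, hi⟩)

theorem Convex.doignon_theorem {ι : Type*} {k : ℕ} {D : ι → Set (Fin k → ℝ)}
    (hD : ∀ i, Convex ℝ (D i)) (s : Finset ι)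
    (hs : ∀ I ⊆ s, #I ≤ 2 ^ k → ∃ p ∈ intLattice k, ∀ i ∈ I, p ∈ D i) :
    ∃ p ∈ intLattice k, ∀ i ∈ s, p ∈ D i := by
  classical
  exact Convex.helly_of_radon (fun s Y hs hY =>
    exists_mem_intLattice_forall_mem_convexHull_image_compl (by simpa using hs) Y hY) hD s hs

theorem Convex.setOf_prodMk_mem {𝕜 E F : Type*} [Semiring 𝕜] [PartialOrder 𝕜]
    [AddCommMonoid E] [AddCommMonoid F] [Module 𝕜 E] [Module 𝕜 F] {s : Set (E × F)}
    (hs : Convex 𝕜 s) (y : F) : Convex 𝕜 {x | (x, y) ∈ s} := by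
  refine convex_iff_segment_subset.2 fun x₁ hx₁ x₂ hx₂ => ?_
  change segment 𝕜 x₁ x₂ ⊆ (·, y) ⁻¹' s
  rw [← image_subset_iff, Prod.image_mk_segment_left]
  exact hs.segment_subset hx₁ hx₂

theorem exists_mem_intLattice_forall_card_eq_exists_prodMk_mem {ι E : Type*} [Fintype ι]
    [AddCommGroup E] [Module ℝ E] {k n : ℕ} {F : ι → Set (E × (Fin k → ℝ))}
    (hF : ∀ i, Convex ℝ (F i)) (hcard : n * 2 ^ k ≤ Fintype.card ι)
    (h : ∀ G : Finset ι, #G = n * 2 ^ k →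
      ∃ p : E × (Fin k → ℝ), p.2 ∈ intLattice k ∧ ∀ i ∈ G, p ∈ F i) :
    ∃ u ∈ intLattice k, ∀ S : Finset ι, #S = n → ∃ v, ∀ i ∈ S, (v, u) ∈ F i := by
  classical
  let D : Finset ι → Set (Fin k → ℝ) := fun S => Prod.snd '' ⋂ i ∈ S, F i
  have hD : ∀ S, Convex ℝ (D S) := fun S =>
    (convex_iInter₂ fun i _ => hF i).linear_image (LinearMap.snd ℝ E (Fin k → ℝ))
  have hsmall : ∀ I ⊆ Finset.univ.powersetCard n, #I ≤ 2 ^ k →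
      ∃ u ∈ intLattice k, ∀ S ∈ I, u ∈ D S := by
    intro I hI hIcard
    have hU : #(I.biUnion id) ≤ n * 2 ^ k := by
      rw [mul_comm]
      refine (Finset.card_biUnion_le_card_mul I id n fun S hS => ?_).trans
        (Nat.mul_le_mul_right n hIcard)
      exact (Finset.mem_powersetCard.1 (hI hS)).2.le
    obtain ⟨W, hUW, hW⟩ := Finset.exists_superset_card_eq hU hcard
    obtain ⟨p, hp, hpW⟩ := h W hW
    refine ⟨p.2, hp, fun S hS => ⟨p, mem_iInter₂.2 fun i hi => hpW i (hUW ?_), rfl⟩⟩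
    exact Finset.mem_biUnion.2 ⟨S, hS, hi⟩
  obtain ⟨u, hu, huD⟩ := Convex.doignon_theorem hD _ hsmall
  refine ⟨u, hu, fun S hS => ?_⟩
  obtain ⟨q, hq, rfl⟩ := huD S (Finset.mem_powersetCard.2 ⟨Finset.subset_univ S, hS⟩)
  exact ⟨q.1, fun i hi => mem_iInter₂.1 hq i hi⟩

/-- Mixed Helly theorem: if every `(d+1)·2^k` members of a finite family of at least
`(d+1)·2^k` convex sets in `ℝ^{d+k} = ℝ^d × ℝ^k` have a common point whose last `k`
coordinates are integers, then all members have such a common point. -/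
theorem mixed_helly (d k : ℕ) {ι : Type} [Fintype ι]
    (F : ι → Set ((Fin d → ℝ) × (Fin k → ℝ)))
    (hcard : (d + 1) * 2 ^ k ≤ Fintype.card ι)
    (hconv : ∀ i, Convex ℝ (F i))
    (h : ∀ G : Finset ι, G.card = (d + 1) * 2 ^ k →
      ∃ p : (Fin d → ℝ) × (Fin k → ℝ), (∀ j, ∃ m : ℤ, p.2 j = (m : ℝ)) ∧ ∀ i ∈ G, p ∈ F i) :
    ∃ p : (Fin d → ℝ) × (Fin k → ℝ), (∀ j, ∃ m : ℤ, p.2 j = (m : ℝ)) ∧ ∀ i, p ∈ F i := by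
  obtain ⟨u, hu, hfiber⟩ := exists_mem_intLattice_forall_card_eq_exists_prodMk_mem hconv hcard h
  have hd : Module.finrank ℝ (Fin d → ℝ) + 1 ≤ #(Finset.univ : Finset ι) := by
    rw [Module.finrank_fin_fun, Finset.card_univ]
    exact le_of_mul_le_of_one_le_left hcard Nat.one_le_two_pow
  obtain ⟨v, hv⟩ := Convex.helly_theorem (F := fun i => {v | (v, u) ∈ F i}) hd
    (fun i _ => (hconv i).setOf_prodMk_mem u) fun I _ hI => by
      rw [Module.finrank_fin_fun] at hI
      obtain ⟨v, hv⟩ := hfiber I hI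
      exact ⟨v, mem_iInter₂.2 hv⟩
  exact ⟨(v, u), hu, fun i => mem_iInter₂.1 hv i (Finset.mem_univ i)⟩
end

section
/- Integer Tverberg theorem: let d ≥ 1 and r ≥ 1, and let P ⊆ ℤ^d be a finite set with |P| ≥ (r−1)·d·2^d + 1. Then P can be partitioned into r pairwise disjoint subsets P₁, …, P_r such that the intersection ⋂_{i=1}^r conv(P_i) contains a point of ℤ^d. -/
/-
A point whose Tukey depth in a finite set `T ⊆ ℝ^d` exceeds `(r - 1) d` is a Tverberg point for
`r` parts: peel off a Carathéodory-minimal subset `Q` of `T` with `z ∈ conv Q`. The weights of `z`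
on `Q` are all positive and `Q` is affinely independent, so a closed halfspace through `z` contains
at most `d` points of `Q`; hence each peeled set lowers the depth by at most `d`.

Such a point can be found in `ℤ^d` once `|P| > 2^d (r - 1) d`. Otherwise every integer point `z`
of a box around `P` is cut off by an integer halfspace `a ⬝ᵥ x < a ⬝ᵥ z` that misses at most
`(r - 1) d` points of `P`. Any `2^d` of these halfspaces share a point of `P`, so by the
Doignon–Bell–Scarf theorem (Helly's theorem for integer points, with Helly number `2^d`) all of
them and the box share an integer point, which would then be cut off by its own halfspace.
-/

open Finset Module Function

section FiniteDimensional

variable {E : Type*} [AddCommGroup E] [Module ℝ E] [FiniteDimensional ℝ E]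

theorem AffineIndependent.card_le_finrank_of_forall_eq {Q : Finset E}
    (hQ : AffineIndependent ℝ ((↑) : Q → E)) {f : E →ₗ[ℝ] ℝ} (hf : f ≠ 0) {c : ℝ}
    (hfQ : ∀ q ∈ Q, f q = c) : #Q ≤ finrank ℝ E := by
  have hspan : vectorSpan ℝ (Set.range ((↑) : Q → E)) ≤ LinearMap.ker f := by
    rw [vectorSpan_def, Submodule.span_le]
    rintro v ⟨_, ⟨p, rfl⟩, _, ⟨q, rfl⟩, rfl⟩
    simp [hfQ p p.2, hfQ q q.2]
  have hker : finrank ℝ (LinearMap.ker f) < finrank ℝ E :=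
    Submodule.finrank_lt (by rwa [Ne, LinearMap.ker_eq_top])
  have := hQ.card_le_finrank_succ
  have := Submodule.finrank_mono hspan
  simp only [Fintype.card_coe] at *
  omega

theorem AffineIndependent.card_finset_le_finrank_succ {Q : Finset E}
    (hQ : AffineIndependent ℝ ((↑) : Q → E)) : #Q ≤ finrank ℝ E + 1 := by
  simpa using hQ.card_le_finrank_succ.trans (Nat.add_le_add_right (Submodule.finrank_le _) 1)

end FiniteDimensional

section Depth

variable {E : Type*} [AddCommGroup E] [Module ℝ E] [DecidableEq E]

/-- The Tukey depth of `z` in `T` exceeds `k`. -/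
def IsDeepPoint (k : ℕ) (T : Finset E) (z : E) : Prop :=
  ∀ X ⊆ T, #X ≤ k → z ∈ convexHull ℝ (↑(T \ X) : Set E)

theorem IsDeepPoint.mem_convexHull {k : ℕ} {T : Finset E} {z : E} (hz : IsDeepPoint k T z) :
    z ∈ convexHull ℝ (T : Set E) := by
  simpa using hz ∅ (empty_subset T) (by simp)

theorem IsDeepPoint.lt_card_filter {k : ℕ} {T : Finset E} {z : E} (hz : IsDeepPoint k T z)
    (f : E →ₗ[ℝ] ℝ) : k < #(T.filter fun x => f z ≤ f x) := by
  by_contra! hcard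
  have hsub : (↑(T \ T.filter fun x => f z ≤ f x) : Set E) ⊆ f ⁻¹' Set.Iio (f z) := by
    intro x hx
    simp_all
  exact lt_irrefl (f z)
    (convexHull_min hsub ((convex_Iio _).linear_preimage f) (hz _ (filter_subset _ T) hcard))

theorem apply_eq_of_mem_convexHull_of_forall_le {Q : Finset E} {z : E}
    (hz : z ∈ convexHull ℝ (Q : Set E))
    (hmin : ∀ q ∈ Q, z ∉ convexHull ℝ (↑(Q.erase q) : Set E))
    (f : E →ₗ[ℝ] ℝ) (hf : ∀ q ∈ Q, f z ≤ f q) : ∀ q ∈ Q, f q = f z := by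
  obtain ⟨w, hw0, hw1, hwz⟩ := Finset.mem_convexHull'.mp hz
  have hsum : ∑ q ∈ Q, w q * (f q - f z) = 0 := by
    simp only [mul_sub, sum_sub_distrib, ← sum_mul, hw1, one_mul, sub_eq_zero]
    rw [← hwz, map_sum]
    simp [map_smul]
  intro q hq
  have hterm := (sum_eq_zero_iff_of_nonneg fun p hp =>
    mul_nonneg (hw0 p hp) (sub_nonneg.mpr (hf p hp))).mp hsum q hq
  rcases mul_eq_zero.mp hterm with hwq | hfq
  · refine absurd (Finset.mem_convexHull'.mpr ⟨w, fun p hp => hw0 p (mem_of_mem_erase hp),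
      ?_, ?_⟩) (hmin q hq)
    · rwa [sum_erase _ hwq]
    · rwa [sum_erase _ (by rw [hwq, zero_smul])]
  · exact sub_eq_zero.mp hfq

theorem affineIndependent_of_forall_notMem_convexHull_erase {Q : Finset E} {z : E}
    (hz : z ∈ convexHull ℝ (Q : Set E))
    (hmin : ∀ q ∈ Q, z ∉ convexHull ℝ (↑(Q.erase q) : Set E)) :
    AffineIndependent ℝ ((↑) : Q → E) := by
  by_contra h
  obtain ⟨q, hq⟩ := Caratheodory.mem_convexHull_erase h hz
  exact hmin q q.2 hq

theorem exists_minimal_subset_of_mem_convexHull {T : Finset E} {z : E}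
    (hz : z ∈ convexHull ℝ (T : Set E)) :
    ∃ Q ⊆ T, z ∈ convexHull ℝ (Q : Set E) ∧
      ∀ q ∈ Q, z ∉ convexHull ℝ (↑(Q.erase q) : Set E) := by
  open Caratheodory in
  have hQT : minCardFinsetOfMemConvexHull hz ⊆ T := by
    exact_mod_cast minCardFinsetOfMemConvexHull_subseteq hz
  refine ⟨_, hQT, mem_minCardFinsetOfMemConvexHull hz, fun q hq h => ?_⟩
  exact (card_erase_lt_of_mem hq).not_ge <| minCardFinsetOfMemConvexHull_card_le_card hz
    (by exact_mod_cast (erase_subset q _).trans hQT) h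

theorem card_filter_le_finrank_of_minimal [FiniteDimensional ℝ E] {Q : Finset E} {z : E}
    (hz : z ∈ convexHull ℝ (Q : Set E))
    (hmin : ∀ q ∈ Q, z ∉ convexHull ℝ (↑(Q.erase q) : Set E)) {f : E →ₗ[ℝ] ℝ} (hf : f ≠ 0) :
    #(Q.filter fun q => f z ≤ f q) ≤ finrank ℝ E := by
  have hQ := affineIndependent_of_forall_notMem_convexHull_erase hz hmin
  by_contra! hcard
  have hfilter : Q.filter (fun q => f z ≤ f q) = Q :=
    eq_of_subset_of_card_le (filter_subset _ Q) (hQ.card_finset_le_finrank_succ.trans hcard)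
  have hle : ∀ q ∈ Q, f z ≤ f q := fun q hq => by
    rw [← hfilter] at hq
    exact (mem_filter.mp hq).2
  exact hcard.not_ge ((card_filter_le _ _).trans
    (hQ.card_le_finrank_of_forall_eq hf (apply_eq_of_mem_convexHull_of_forall_le hz hmin f hle)))

end Depth

section Tverberg

variable {E : Type*} [NormedAddCommGroup E] [NormedSpace ℝ E] [FiniteDimensional ℝ E]
  [DecidableEq E]

theorem IsDeepPoint.sdiff {k : ℕ} {T Q : Finset E} {z : E}
    (hz : IsDeepPoint (k + finrank ℝ E) T z) (hQz : z ∈ convexHull ℝ (Q : Set E))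
    (hmin : ∀ q ∈ Q, z ∉ convexHull ℝ (↑(Q.erase q) : Set E)) (hT : #Q + k < #T) :
    IsDeepPoint k (T \ Q) z := by
  intro X _ hXk
  by_contra hzX
  rw [sdiff_sdiff_left] at hzX
  obtain ⟨f, u, hfu, hu⟩ := geometric_hahn_banach_closed_point (convex_convexHull ℝ _)
    ((T \ (Q ∪ X)).finite_toSet.isCompact_convexHull ℝ).isClosed hzX
  have hlt : ∀ x ∈ T \ (Q ∪ X), f x < f z := fun x hx =>
    (hfu x (subset_convexHull ℝ _ hx)).trans hu
  have hf : (f : E →ₗ[ℝ] ℝ) ≠ 0 := by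
    obtain ⟨y, hy⟩ : (T \ (Q ∪ X)).Nonempty := by
      rw [← card_pos]
      have := le_card_sdiff (Q ∪ X) T
      have := card_union_le Q X
      omega
    intro h0
    have := LinearMap.congr_fun h0 (y - z)
    simp only [ContinuousLinearMap.coe_coe, map_sub, LinearMap.zero_apply, sub_self,
      sub_eq_zero] at this
    exact (hlt y hy).ne this
  have hdeep := hz.lt_card_filter f
  have hQf := card_filter_le_finrank_of_minimal hQz hmin hf
  simp only [ContinuousLinearMap.coe_coe] at hdeep hQf
  have hcover : (T.filter fun x => f z ≤ f x) ⊆ (Q.filter fun q => f z ≤ f q) ∪ X := by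
    intro x hx
    obtain ⟨hxT, hfx⟩ := mem_filter.mp hx
    by_contra hxQX
    have : x ∈ T \ (Q ∪ X) := by simp_all
    exact (hlt x this).not_ge hfx
  have := (card_le_card hcover).trans (card_union_le _ _)
  omega

theorem subset_of_iUnion_coe_eq {α ι : Type*} {R : ι → Finset α} {T : Finset α}
    (h : ⋃ i, (R i : Set α) = T) (i : ι) : R i ⊆ T := by
  rw [← coe_subset, ← h]
  exact Set.subset_iUnion (fun i => (R i : Set α)) i

theorem pairwise_disjoint_on_cons {α : Type*} {n : ℕ} {Q : Finset α} {R : Fin n → Finset α}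
    (hQR : ∀ i, Disjoint Q (R i)) (hR : Pairwise (Disjoint on R)) :
    Pairwise (Disjoint on (Fin.cons Q R : Fin (n + 1) → Finset α)) := by
  rw [pairwise_fin_succ_iff]
  refine ⟨fun i => (hQR i).symm, hQR, fun i j hij => ?_⟩
  simpa [Function.onFun] using hR hij

theorem IsDeepPoint.exists_tverberg_partition {n : ℕ} {T : Finset E} {z : E}
    (hT : n * (finrank ℝ E + 1) + 1 ≤ #T) (hz : IsDeepPoint (n * finrank ℝ E) T z) :
    ∃ R : Fin (n + 1) → Finset E, Pairwise (Disjoint on R) ∧ ⋃ i, (R i : Set E) = T ∧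
      ∀ i, z ∈ convexHull ℝ (R i : Set E) := by
  induction n generalizing T with
  | zero =>
    exact ⟨fun _ => T, fun i j h => (h (Subsingleton.elim (α := Fin 1) i j)).elim,
      Set.iUnion_const _, fun _ => hz.mem_convexHull⟩
  | succ n ih =>
    rw [Nat.succ_mul] at hT hz
    obtain ⟨Q, hQT, hQz, hmin⟩ := exists_minimal_subset_of_mem_convexHull hz.mem_convexHull
    have hQcard :=
      (affineIndependent_of_forall_notMem_convexHull_erase hQz hmin).card_finset_le_finrank_succ
    have hnd := Nat.mul_le_mul_left n (Nat.le_add_right (finrank ℝ E) 1)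
    have hTQ : n * (finrank ℝ E + 1) + 1 ≤ #(T \ Q) := by
      rw [card_sdiff_of_subset hQT]
      omega
    obtain ⟨R, hRdisj, hRunion, hRhull⟩ := ih hTQ (hz.sdiff hQz hmin (by omega))
    refine ⟨Fin.cons Q R, pairwise_disjoint_on_cons (fun i =>
      disjoint_of_subset_right (subset_of_iUnion_coe_eq hRunion i) disjoint_sdiff) hRdisj, ?_,
      Fin.cases hQz (by simpa using hRhull)⟩
    rw [Set.iUnion_fin_add_one_eq_iUnion_succ]
    simp [comp_def, hRunion, Set.union_sdiff_cancel (coe_subset.mpr hQT)]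

end Tverberg

section Doignon

variable {ι : Type*} {d : ℕ} (a : ι → Fin d → ℤ)

def IntFeasible (b : ι → ℤ) (s : Finset ι) : Prop :=
  ∃ x : Fin d → ℤ, ∀ i ∈ s, a i ⬝ᵥ x ≤ b i

theorem exists_add_eq_two_smul_of_zmod_eq {y₁ y₂ : Fin d → ℤ}
    (h : (fun j => (y₁ j : ZMod 2)) = fun j => (y₂ j : ZMod 2)) :
    ∃ m : Fin d → ℤ, y₁ + y₂ = (2 : ℤ) • m := by
  have hdvd : ∀ j, ∃ c, y₁ j + y₂ j = 2 * c := fun j => by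
    obtain ⟨c, hc⟩ := (ZMod.intCast_eq_intCast_iff_dvd_sub _ _ 2).mp (congrFun h j)
    exact ⟨y₁ j + c, by push_cast at hc; omega⟩
  choose m hm using hdvd
  exact ⟨m, funext fun j => by simpa using hm j⟩

theorem intFeasible_of_card_filter_le {k : ℕ} {b : ι → ℤ}
    {t : Finset ι} {P : Finset (Fin d → ℤ)} (hP : #t * k < #P)
    (h : ∀ i ∈ t, #(P.filter fun p => b i < a i ⬝ᵥ p) ≤ k) : IntFeasible a b t := by
  classical
  by_contra hinf
  simp only [IntFeasible, not_exists, not_forall, not_le] at hinf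
  have hcover : P ⊆ t.biUnion fun i => P.filter fun p => b i < a i ⬝ᵥ p := fun p hp => by
    obtain ⟨i, hi, hlt⟩ := hinf p
    exact mem_biUnion.mpr ⟨i, hi, mem_filter.mpr ⟨hp, hlt⟩⟩
  have := (card_le_card hcover).trans card_biUnion_le
  have := sum_le_sum h
  simp only [sum_const, smul_eq_mul] at this
  omega

variable [DecidableEq ι]

theorem intFeasible_of_forall_update {b : ι → ℤ} {s : Finset ι} (hs : 2 ^ d < #s)
    (h : ∀ i ∈ s, IntFeasible a (update b i (b i + 1)) s) : IntFeasible a b s := by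
  choose! y hy using h
  -- Two of the more than `2 ^ d` witnesses agree mod 2. Their midpoint is an integer point; it
  -- overshoots no inequality by more than `1/2`, hence satisfies them all.
  obtain ⟨i₁, hi₁, i₂, hi₂, hne, hpar⟩ := exists_ne_map_eq_of_card_lt_of_maps_to
    (t := (univ : Finset (Fin d → ZMod 2))) (by simpa using hs)
    (f := fun i j => (y i j : ZMod 2)) (fun _ _ => mem_univ _)
  obtain ⟨m, hm⟩ := exists_add_eq_two_smul_of_zmod_eq hpar
  refine ⟨m, fun j hj => ?_⟩
  have hmid : a j ⬝ᵥ y i₁ + a j ⬝ᵥ y i₂ = 2 * (a j ⬝ᵥ m) := by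
    rw [← dotProduct_add, hm, dotProduct_smul, smul_eq_mul]
  have h₁ := hy i₁ hi₁ j hj
  have h₂ := hy i₂ hi₂ j hj
  rw [update_apply] at h₁ h₂
  split_ifs at h₁ h₂ with e₁ e₂
  · exact absurd (e₁.symm.trans e₂) hne
  all_goals subst_vars; omega

theorem exists_maximal_not_intFeasible {b : ι → ℤ} {s : Finset ι} (hs : ¬IntFeasible a b s)
    (h : ∀ i ∈ s, IntFeasible a b (s.erase i)) :
    ∃ b' : ι → ℤ, ¬IntFeasible a b' s ∧ ∀ i ∈ s, IntFeasible a (update b' i (b' i + 1)) s := by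
  choose! x hx using h
  -- Raise the right-hand sides as far as the system stays infeasible: the witnesses `x i` of the
  -- feasibility of `s.erase i` bound how far.
  have hbound : ∀ b' : ι → ℤ, (∀ i ∈ s, b i ≤ b' i) → ¬IntFeasible a b' s →
      ∀ i ∈ s, b' i < a i ⬝ᵥ x i := by
    intro b' hbb' hb' i hi
    by_contra! hle
    refine hb' ⟨x i, fun j hj => ?_⟩
    obtain rfl | hji := eq_or_ne j i
    · exact hle
    · exact (hx i hi j (mem_erase.mpr ⟨hji, hj⟩)).trans (hbb' j hj)
  obtain ⟨_, ⟨b', hbb', hb', rfl⟩, hmax⟩ := Int.exists_greatest_of_bdd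
    (P := fun n => ∃ b' : ι → ℤ, (∀ i ∈ s, b i ≤ b' i) ∧ ¬IntFeasible a b' s ∧
      n = ∑ i ∈ s, b' i)
    ⟨∑ i ∈ s, a i ⬝ᵥ x i, fun _ ⟨b', hbb', hb', hn⟩ =>
      hn ▸ sum_le_sum fun i hi => (hbound b' hbb' hb' i hi).le⟩
    ⟨_, b, fun _ _ => le_rfl, hs, rfl⟩
  refine ⟨b', hb', fun i hi => ?_⟩
  by_contra hi'
  have hsum : ∑ j ∈ s, update b' i (b' i + 1) j = ∑ j ∈ s, b' j + 1 := by
    rw [sum_update_of_mem hi, ← add_sum_erase s b' hi, sdiff_singleton_eq_erase]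
    ring
  have := hmax _ ⟨update b' i (b' i + 1), fun j hj => ?_, hi', rfl⟩
  · omega
  · rw [update_apply]
    split_ifs with hji
    · subst hji; linarith [hbb' j hj]
    · exact hbb' j hj

theorem intFeasible_of_forall_subset_card_le (b : ι → ℤ) (s : Finset ι)
    (h : ∀ t ⊆ s, #t ≤ 2 ^ d → IntFeasible a b t) : IntFeasible a b s := by
  induction s using Finset.strongInduction with
  | H s ih =>
    by_cases hs : #s ≤ 2 ^ d
    · exact h s Subset.rfl hs
    by_contra hinf
    obtain ⟨b', hb', hrelax⟩ := exists_maximal_not_intFeasible a hinf fun i hi =>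
      ih _ (erase_ssubset hi) fun t ht => h t (ht.trans (erase_subset i s))
    exact hb' (intFeasible_of_forall_update a (not_le.mp hs) hrelax)

end Doignon

def intCastPi (ι : Type*) : (ι → ℤ) ↪ (ι → ℝ) :=
  ⟨fun w i => (w i : ℝ), Int.cast_injective.comp_left⟩

theorem intCastPi_dotProduct {ι : Type*} [Fintype ι] (v w : ι → ℤ) :
    intCastPi ι v ⬝ᵥ intCastPi ι w = ((v ⬝ᵥ w : ℤ) : ℝ) :=
  ((Int.castRingHom ℝ).map_dotProduct v w).symm

theorem exists_intCastPi_mem_of_isOpen {ι : Type*} [Fintype ι] {U : Set (ι → ℝ)}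
    (hU : IsOpen U) (hne : U.Nonempty) (hsmul : ∀ t : ℝ, 0 < t → ∀ v ∈ U, t • v ∈ U) :
    ∃ a : ι → ℤ, intCastPi ι a ∈ U := by
  obtain ⟨v, hv⟩ := hne
  obtain ⟨ε, hε, hball⟩ := Metric.isOpen_iff.mp hU v hv
  obtain ⟨n, hn⟩ := exists_nat_gt ε⁻¹
  have hn0 : (0 : ℝ) < n := (inv_pos.mpr hε).trans hn
  refine ⟨fun i => round (n * v i), ?_⟩
  have hround : ‖intCastPi ι (fun i => round (n * v i)) - (n : ℝ) • v‖ ≤ 1 / 2 :=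
    (pi_norm_le_iff_of_nonneg (by norm_num)).mpr fun i => by
      simpa [intCastPi, abs_sub_comm] using abs_sub_round ((n : ℝ) * v i)
  have hmem : (n : ℝ)⁻¹ • intCastPi ι (fun i => round (n * v i)) ∈ U := by
    refine hball (mem_ball_iff_norm.mpr ?_)
    calc ‖(n : ℝ)⁻¹ • intCastPi ι (fun i => round (n * v i)) - v‖
        = (n : ℝ)⁻¹ * ‖intCastPi ι (fun i => round (n * v i)) - (n : ℝ) • v‖ := by
          rw [← norm_smul_of_nonneg (inv_nonneg.mpr hn0.le), smul_sub, inv_smul_smul₀ hn0.ne']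
      _ ≤ (n : ℝ)⁻¹ * (1 / 2) := by gcongr
      _ < ε := by
        rw [inv_lt_comm₀ hε hn0] at hn
        linarith [inv_pos.mpr hn0]
  simpa [smul_inv_smul₀ hn0.ne'] using hsmul n hn0 _ hmem

theorem exists_dotProduct_lt_of_notMem_convexHull {ι : Type*} [Fintype ι]
    {S : Finset (ι → ℤ)} {z : ι → ℤ}
    (hz : intCastPi ι z ∉ convexHull ℝ (↑(S.map (intCastPi ι)) : Set (ι → ℝ))) :
    ∃ a : ι → ℤ, ∀ p ∈ S, a ⬝ᵥ p < a ⬝ᵥ z := by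
  classical
  obtain ⟨f, u, hfu, hu⟩ := geometric_hahn_banach_closed_point (convex_convexHull ℝ _)
    ((S.map (intCastPi ι)).finite_toSet.isCompact_convexHull ℝ).isClosed hz
  -- The strictly separating directions form an open cone, nonempty by Hahn–Banach.
  let U : Set (ι → ℝ) := ⋂ p ∈ S, {v | v ⬝ᵥ intCastPi ι p < v ⬝ᵥ intCastPi ι z}
  have hU : IsOpen U := isOpen_biInter_finset fun p _ => isOpen_lt
    (continuous_id.dotProduct continuous_const) (continuous_id.dotProduct continuous_const)
  let v : ι → ℝ := fun i => f fun j => if i = j then 1 else 0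
  have hf : ∀ x, f x = v ⬝ᵥ x := fun x => by
    rw [dotProduct_comm]
    exact (f : (ι → ℝ) →ₗ[ℝ] ℝ).pi_apply_eq_sum_univ x
  have hne : U.Nonempty := ⟨v, Set.mem_iInter₂.mpr fun p hp => by
    simp only [Set.mem_ofPred_eq, ← hf]
    exact (hfu _ (subset_convexHull ℝ _ (mem_map_of_mem _ hp))).trans hu⟩
  have hsmul : ∀ t : ℝ, 0 < t → ∀ v ∈ U, t • v ∈ U := fun t ht v hv => by
    simp only [U, Set.mem_iInter₂, Set.mem_ofPred_eq, smul_dotProduct, smul_eq_mul] at hv ⊢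
    exact fun p hp => mul_lt_mul_of_pos_left (hv p hp) ht
  obtain ⟨a, ha⟩ := exists_intCastPi_mem_of_isOpen hU hne hsmul
  refine ⟨a, fun p hp => ?_⟩
  have := Set.mem_iInter₂.mp ha p hp
  simp only [Set.mem_ofPred_eq, intCastPi_dotProduct] at this
  exact_mod_cast this

theorem exists_card_filter_le_of_not_isDeepPoint {ι : Type*} [Fintype ι] {k : ℕ}
    {P : Finset (ι → ℤ)} {z : ι → ℤ}
    (h : ¬IsDeepPoint k (P.map (intCastPi ι)) (intCastPi ι z)) :
    ∃ a : ι → ℤ, #(P.filter fun p => a ⬝ᵥ z ≤ a ⬝ᵥ p) ≤ k := by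
  classical
  simp only [IsDeepPoint, not_forall] at h
  obtain ⟨X, hX, hXk, hzX⟩ := h
  obtain ⟨Y, hYP, rfl⟩ := subset_map_iff.mp hX
  rw [← Finset.map_sdiff] at hzX
  obtain ⟨a, ha⟩ := exists_dotProduct_lt_of_notMem_convexHull hzX
  refine ⟨a, (card_le_card fun p hp => ?_).trans (card_map (intCastPi ι) ▸ hXk)⟩
  obtain ⟨hpP, hap⟩ := mem_filter.mp hp
  by_contra hpY
  exact (ha p (mem_sdiff.mpr ⟨hpP, hpY⟩)).not_ge hap

theorem exists_isDeepPoint {d k : ℕ} (P : Finset (Fin d → ℤ)) (hP : 2 ^ d * k < #P) :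
    ∃ z, IsDeepPoint k (P.map (intCastPi _)) (intCastPi _ z) := by
  by_contra! h
  choose A hA using fun z => exists_card_filter_le_of_not_isDeepPoint (h z)
  obtain ⟨M, hM⟩ : ∃ M : ℤ, ∀ p ∈ P, ∀ i, |p i| ≤ M :=
    ⟨∑ p ∈ P, ∑ i, |p i|, fun p hp i =>
      (single_le_sum (fun i _ => abs_nonneg (p i)) (mem_univ i)).trans
        (single_le_sum (f := fun p : Fin d → ℤ => ∑ i, |p i|)
          (fun p _ => sum_nonneg fun i _ => abs_nonneg (p i)) hp)⟩
  -- `inl z`: the halfspace cutting off `z`; `inr`: the facets of the box `[-M, M]^d`.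
  let a : (Fin d → ℤ) ⊕ (Fin d ⊕ Fin d) → Fin d → ℤ :=
    Sum.elim A (Sum.elim (fun i => Pi.single i 1) (fun i => -Pi.single i 1))
  let b : (Fin d → ℤ) ⊕ (Fin d ⊕ Fin d) → ℤ := Sum.elim (fun z => A z ⬝ᵥ z - 1) (fun _ => M)
  let B := Fintype.piFinset fun _ : Fin d => Icc (-M) M
  have hviol : ∀ i ∈ B.disjSum univ, #(P.filter fun p => b i < a i ⬝ᵥ p) ≤ k := by
    rintro (z | j) -
    · simpa [a, b, Int.sub_one_lt_iff] using hA z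
    · rw [filter_false_of_mem fun p hp => ?_, card_empty]
      · exact k.zero_le
      rcases j with i | i <;> simp [a, b, single_dotProduct] <;> linarith [abs_le.mp (hM p hp i)]
  obtain ⟨x, hx⟩ := intFeasible_of_forall_subset_card_le a b (B.disjSum univ) fun t ht htc =>
    intFeasible_of_card_filter_le a (lt_of_le_of_lt (Nat.mul_le_mul_right k htc) hP)
      fun i hi => hviol i (ht hi)
  have hxB : x ∈ B := by
    simp only [B, Fintype.mem_piFinset, mem_Icc]
    intro i
    have h₁ := hx (.inr (.inl i)) (by simp)
    have h₂ := hx (.inr (.inr i)) (by simp)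
    simp [a, b, single_dotProduct] at h₁ h₂
    omega
  have := hx (.inl x) (inl_mem_disjSum.mpr hxB)
  simp [a, b] at this

theorem exists_map_eq_of_iUnion_map_eq {α β ι : Type*} (f : α ↪ β) {P : Finset α}
    {R : ι → Finset β} (hR : Pairwise (Disjoint on R)) (hRP : ⋃ i, (R i : Set β) = P.map f) :
    ∃ Q : ι → Finset α, (∀ i, (Q i).map f = R i) ∧ Pairwise (Disjoint on Q) ∧
      ⋃ i, (Q i : Set α) = P := by
  choose Q _ hQ using fun i => subset_map_iff.mp (subset_of_iUnion_coe_eq hRP i)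
  refine ⟨Q, fun i => (hQ i).symm, fun i j hij => ?_, ?_⟩
  · simpa [onFun, hQ i, hQ j] using hR hij
  · apply Set.image_injective.mpr f.injective
    simpa [Set.image_iUnion, hQ] using hRP

/-- Integer Tverberg theorem: any finite set of at least `(r-1)·d·2^d + 1` integer points
in `ℤ^d` can be partitioned into `r` pairwise disjoint subsets such that the intersection
of the convex hulls of the parts contains an integer point. -/
theorem integer_tverberg (d r : ℕ) (hd : 1 ≤ d) (hr : 1 ≤ r) (P : Finset (Fin d → ℤ))
    (hP : (r - 1) * d * 2 ^ d + 1 ≤ P.card) :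
    ∃ Q : Fin r → Finset (Fin d → ℤ),
      (∀ i j, i ≠ j → Disjoint (Q i) (Q j)) ∧
      (⋃ i, (Q i : Set (Fin d → ℤ))) = (P : Set (Fin d → ℤ)) ∧
      ∃ z : Fin d → ℤ, ∀ i,
        (fun j => (z j : ℝ)) ∈
          convexHull ℝ ((fun w : Fin d → ℤ => fun j => (w j : ℝ)) '' (Q i : Set (Fin d → ℤ))) := by
  obtain ⟨n, rfl⟩ : ∃ n, r = n + 1 := ⟨r - 1, by omega⟩
  rw [Nat.add_sub_cancel] at hP
  have hfin : finrank ℝ (Fin d → ℝ) = d := Module.finrank_fin_fun ℝ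
  have hd2 : d + 1 ≤ d * 2 ^ d := by
    have := Nat.one_lt_two_pow (n := d) (by omega)
    nlinarith
  have hn := Nat.mul_le_mul_left n hd2
  obtain ⟨z, hz⟩ := exists_isDeepPoint P (k := n * d) (by rw [mul_comm]; omega)
  obtain ⟨R, hRdisj, hRunion, hRhull⟩ := IsDeepPoint.exists_tverberg_partition (n := n)
    (T := P.map (intCastPi _)) (by rw [hfin, card_map, ← mul_assoc] at *; omega) (by rwa [hfin])
  obtain ⟨Q, hQR, hQdisj, hQunion⟩ := exists_map_eq_of_iUnion_map_eq _ hRdisj hRunion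
  refine ⟨Q, hQdisj, hQunion, z, fun i => ?_⟩
  have := hRhull i
  rwa [← hQR i, coe_map] at this
end

section
/- Octahedral Tucker lemma: let n, m ≥ 1, let V be the set of nonzero vectors x ∈ {−1, 0, +1}^n, and for x, y ∈ V write x ⪯ y if every nonzero coordinate of x agrees with the corresponding coordinate of y (i.e. x_i ≠ 0 implies y_i = x_i). Suppose λ : V → {±1, ±2, …, ±m} satisfies λ(−x) = −λ(x) for all x ∈ V, and λ(x) + λ(y) ≠ 0 for all x, y ∈ V with x ⪯ y. Then n ≤ m. -/
/-!
A flag of order `N` is a maximal chain `x₀ ⪰ x₁ ⪰ ⋯ ⪰ x_{N-1}` of nonzero sign vectors in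
`{-1, 0, 1}^N`; it is alternating if its labels `λ(xᵢ)`, listed by increasing absolute value, have
distinct absolute values and alternate in sign starting with `+`. For every `N` and every labelling
as in the theorem, the number of alternating flags is odd. An alternating flag of order `n` then
exists, and its `n` labels have distinct absolute values in `{1, …, m}`.

Parity goes by induction on `N`, comparing `λ` with `λ(0, ·)`. By antipodality the alternating
flags are as many as the flags with sign `+` at coordinate `0` whose labels alternate starting with
either sign. Since no two labels of a flag cancel, a label sequence alternates (either way) iff an
odd number of its one-element deletions alternate starting with `+`, so one may count pairs
(flag, deleted vector `x_j`) with alternating remainder instead. Exchanging the coordinates by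
which `x_{j-1}` and `x_j` exceed their successors, or for `j = 0` flipping the sign of the
coordinate by which `x₀` exceeds `x₁`, changes only `x_j`. These involutions pair off all pairs
except those with `j = 0` where `x₀` exceeds `x₁` by the coordinate `0`, and these are the
alternating flags of `λ(0, ·)`.
-/

open Finset Function Equiv

namespace OctahedralTucker

/-- For `σ = ±1`: listed by increasing absolute value, the elements of `M` have distinct absolute
values and alternate in sign, the first one having sign `σ`. -/
def IsAlternating (σ : ℤ) (M : Multiset ℤ) : Prop :=
  M.Nodup ∧ ∀ a ∈ M, a.sign = σ * (-1) ^ Multiset.card (M.filter fun b => |b| < |a|)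

instance (σ : ℤ) (M : Multiset ℤ) : Decidable (IsAlternating σ M) := by
  unfold IsAlternating; infer_instance

lemma isAlternating_val {σ : ℤ} {T : Finset ℤ} :
    IsAlternating σ T.val ↔ ∀ a ∈ T, a.sign = σ * (-1) ^ #{b ∈ T | |b| < |a|} := by
  simp [IsAlternating, T.nodup, Finset.card_def]

@[simp]
lemma isAlternating_zero (σ : ℤ) : IsAlternating σ 0 := by
  simp [IsAlternating]

lemma isAlternating_map_neg {σ : ℤ} {M : Multiset ℤ} :
    IsAlternating σ (M.map Neg.neg) ↔ IsAlternating (-σ) M := by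
  simp only [IsAlternating, Multiset.nodup_map_iff_of_injective neg_injective,
    Multiset.forall_mem_map_iff, Multiset.filter_map, Multiset.card_map]
  refine and_congr_right fun _ => forall₂_congr fun a _ => ?_
  simp only [comp_def, abs_neg, Int.sign_neg, neg_mul, neg_eq_iff_eq_neg]

lemma IsAlternating.ne_zero {σ : ℤ} {M : Multiset ℤ} (h : IsAlternating σ M) (hσ : σ ≠ 0)
    {a : ℤ} (ha : a ∈ M) : a ≠ 0 := by
  rintro rfl
  have := h.2 0 ha
  rcases neg_one_pow_eq_or ℤ (Multiset.card (M.filter fun b => |b| < |0|)) with h' | h' <;>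
    simp_all

lemma IsAlternating.card_le {σ : ℤ} {M : Multiset ℤ} (h : IsAlternating σ M) (hσ : σ ≠ 0)
    {m : ℕ} (hm : ∀ a ∈ M, |a| ≤ m) : Multiset.card M ≤ m := by
  set T : Finset ℤ := ⟨M, h.1⟩
  have hinj : Set.InjOn (fun a => |a|) (T : Set ℤ) := by
    intro a ha b hb hab
    rcases abs_eq_abs.mp hab with hab | rfl
    · exact hab
    have h₁ := h.2 _ ha
    have h₂ := h.2 _ hb
    simp only [abs_neg, Int.sign_neg] at h₁
    have : σ * (-1) ^ Multiset.card (M.filter fun c => |c| < |b|) = 0 := by linarith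
    rcases neg_one_pow_eq_or ℤ (Multiset.card (M.filter fun c => |c| < |b|)) with h' | h' <;>
      simp [h', hσ] at this
  have hsub : T.image (fun a => |a|) ⊆ Icc 1 (m : ℤ) := by
    simp only [subset_iff, mem_image, mem_Icc]
    rintro _ ⟨a, ha, rfl⟩
    exact ⟨Int.one_le_abs (h.ne_zero hσ ha), hm a ha⟩
  calc Multiset.card M = #(T.image fun a => |a|) := (card_image_of_injOn hinj).symm
    _ ≤ #(Icc 1 (m : ℤ)) := card_le_card hsub
    _ = m := by simp

lemma not_isAlternating_one_and_neg_one {M : Multiset ℤ} (hM : M ≠ 0) :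
    ¬ (IsAlternating 1 M ∧ IsAlternating (-1) M) := by
  rintro ⟨⟨-, h₁⟩, ⟨-, h₂⟩⟩
  obtain ⟨a, ha⟩ := Multiset.exists_mem_of_ne_zero hM
  have := (h₁ a ha).symm.trans (h₂ a ha)
  rcases neg_one_pow_eq_or ℤ (Multiset.card (M.filter fun b => |b| < |a|)) with h | h <;>
    simp [h] at this

lemma isAlternating_insert_of_forall_abs_lt {σ z : ℤ} {T : Finset ℤ} (hz : z ∉ T)
    (hlt : ∀ b ∈ T, |b| < |z|) :
    IsAlternating σ (insert z T).val ↔ IsAlternating σ T.val ∧ z.sign = σ * (-1) ^ #T := by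
  have below_z : {b ∈ insert z T | |b| < |z|} = T := by
    ext b
    simp only [mem_filter, mem_insert]
    constructor
    · rintro ⟨rfl | hb, hbz⟩
      · exact absurd hbz (lt_irrefl _)
      · exact hb
    · exact fun hb => ⟨Or.inr hb, hlt b hb⟩
  have below_a : ∀ a ∈ T, {b ∈ insert z T | |b| < |a|} = {b ∈ T | |b| < |a|} := fun a ha => by
    rw [filter_insert, if_neg (not_lt.mpr (hlt a ha).le)]
  simp only [isAlternating_val, forall_mem_insert, below_z]
  rw [and_comm]
  exact and_congr_left' (forall₂_congr fun a ha => by rw [below_a a ha])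

lemma sum_isAlternating_val_erase (T : Finset ℤ) (hT : T.Nonempty)
    (hopp : ∀ a ∈ T, ∀ b ∈ T, a + b ≠ 0) :
    ∑ a ∈ T, (if IsAlternating 1 (T.erase a).val then 1 else 0 : ZMod 2) =
      if IsAlternating 1 T.val ∨ IsAlternating (-1) T.val then 1 else 0 := by
  induction T using Finset.induction_on_max_value (fun a : ℤ => |a|) with
  | empty => exact absurd hT Finset.not_nonempty_empty
  | insert z T hzT hmax ih =>
    have hz : z ≠ 0 := fun h =>
      hopp z (mem_insert_self z T) z (mem_insert_self z T) (by simp [h])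
    have hoppT : ∀ a ∈ T, ∀ b ∈ T, a + b ≠ 0 := fun a ha b hb =>
      hopp a (mem_insert_of_mem ha) b (mem_insert_of_mem hb)
    have hlt : ∀ b ∈ T, |b| < |z| := fun b hb => (hmax b hb).lt_of_ne fun h => by
      rcases abs_eq_abs.mp h with rfl | rfl
      · exact hzT hb
      · exact hopp _ (mem_insert_of_mem hb) _ (mem_insert_self _ T) (neg_add_cancel _)
    -- `z` comes last, and deleting an element of `T` shifts the sign it must have.
    have erase_ne : ∀ a ∈ T, IsAlternating 1 ((insert z T).erase a).val ↔
        z.sign = -(-1) ^ #T ∧ IsAlternating 1 (T.erase a).val := fun a ha => by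
      rw [erase_insert_of_ne (ne_of_mem_of_not_mem ha hzT).symm,
        isAlternating_insert_of_forall_abs_lt (fun h => hzT (mem_of_mem_erase h))
          (fun b hb => hlt b (mem_of_mem_erase hb)), ← card_erase_add_one ha, pow_succ, and_comm]
      simp
    rw [sum_insert hzT, erase_insert hzT,
      sum_congr rfl fun a ha => if_congr (erase_ne a ha) rfl rfl]
    simp only [isAlternating_insert_of_forall_abs_lt hzT hlt, ite_and, sum_ite_irrel,
      sum_const_zero]
    have hsign : z.sign = 1 ∨ z.sign = -1 := by
      rcases lt_or_gt_of_ne hz with h | h <;> simp [h]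
    rcases T.eq_empty_or_nonempty with rfl | hTne
    · rcases hsign with hs | hs <;> simp [hs]
    rw [ih hTne hoppT]
    have := not_isAlternating_one_and_neg_one (M := T.val) (by simpa using hTne.ne_empty)
    -- With `p`, `q` the two alternations of `T` and `c` the sign condition on `z`, this reads
    -- `[p] + c ([p] + [q]) = [p ∧ ¬c ∨ q ∧ c]` modulo `2`.
    generalize z.sign = s at hsign ⊢
    rcases neg_one_pow_eq_or ℤ #T with hu | hu <;> rw [hu] <;>
      rcases hsign with rfl | rfl <;>
      by_cases h₁ : IsAlternating 1 T.val <;> by_cases h₂ : IsAlternating (-1) T.val <;>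
      simp_all <;> decide

lemma sum_map_isAlternating_erase (M : Multiset ℤ) (hM : M ≠ 0)
    (hopp : ∀ a ∈ M, ∀ b ∈ M, a + b ≠ 0) :
    (M.map fun a => if IsAlternating 1 (M.erase a) then (1 : ZMod 2) else 0).sum =
      if IsAlternating 1 M ∨ IsAlternating (-1) M then 1 else 0 := by
  by_cases hnd : M.Nodup
  · lift M to Finset ℤ using hnd
    rw [← Finset.sum_eq_multiset_sum]
    exact sum_isAlternating_val_erase M (nonempty_iff_ne_empty.mpr (by simpa using hM)) hopp
  -- Only deleting a repeated `a` can leave an alternating multiset, and then `a` occurs twice.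
  · obtain ⟨a, ha⟩ : ∃ a, 1 < M.count a := by
      simpa [Multiset.nodup_iff_count_le_one] using hnd
    have hnd' : ∀ b, ¬ (IsAlternating 1 (M.erase b) ∧ 1 < (M.erase b).count a) := by
      rintro b ⟨h, hb⟩
      exact absurd (Multiset.nodup_iff_count_le_one.mp h.1 a) (not_le.mpr hb)
    rw [if_neg (by rintro (h | h) <;> exact hnd h.1), Multiset.sum_map_eq_nsmul_single a]
    · by_cases h : IsAlternating 1 (M.erase a)
      · have : M.count a = 2 := by
          have := Multiset.count_erase_self a M
          have : (M.erase a).count a ≤ 1 := not_lt.mp fun h' => hnd' a ⟨h, h'⟩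
          omega
        rw [if_pos h, this]
        decide
      · simp [h]
    · intro b hba _
      exact if_neg fun h => hnd' b ⟨h, by rwa [Multiset.count_erase_of_ne hba.symm]⟩

variable {ι : Type*}

def IsAntipodal (μ : (ι → ℤ) → ℤ) : Prop :=
  ∀ x : ι → ℤ, (∀ i, |x i| ≤ 1) → x ≠ 0 → μ (-x) = -μ x

def HasNoComplementaryEdge (μ : (ι → ℤ) → ℤ) : Prop :=
  ∀ x y : ι → ℤ, (∀ i, |x i| ≤ 1) → x ≠ 0 → (∀ i, |y i| ≤ 1) → y ≠ 0 →
    (∀ i, x i ≠ 0 → y i = x i) → μ x + μ y ≠ 0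

section ConsZero

variable {k : ℕ} {μ : (Fin (k + 1) → ℤ) → ℤ}

lemma abs_cons_zero_le {x : Fin k → ℤ} (hx : ∀ i, |x i| ≤ 1) :
    ∀ i, |(Fin.cons 0 x : Fin (k + 1) → ℤ) i| ≤ 1 :=
  Fin.cases (by simp) hx

lemma cons_zero_ne_zero {x : Fin k → ℤ} (hx : x ≠ 0) : (Fin.cons 0 x : Fin (k + 1) → ℤ) ≠ 0 :=
  fun h => hx (congrArg Fin.tail h)

lemma IsAntipodal.comp_cons_zero (h : IsAntipodal μ) :
    IsAntipodal fun x : Fin k → ℤ => μ (Fin.cons 0 x) := by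
  intro x hx hx0
  have : (Fin.cons 0 (-x) : Fin (k + 1) → ℤ) = -Fin.cons 0 x := by
    ext i
    refine Fin.cases ?_ (fun _ => ?_) i <;> simp
  show μ (Fin.cons 0 (-x)) = -μ (Fin.cons 0 x)
  rw [this, h _ (abs_cons_zero_le hx) (cons_zero_ne_zero hx0)]

lemma HasNoComplementaryEdge.comp_cons_zero (h : HasNoComplementaryEdge μ) :
    HasNoComplementaryEdge fun x : Fin k → ℤ => μ (Fin.cons 0 x) := by
  intro x y hx hx0 hy hy0 hxy
  refine h _ _ (abs_cons_zero_le hx) (cons_zero_ne_zero hx0) (abs_cons_zero_le hy)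
    (cons_zero_ne_zero hy0) (Fin.cases (by simp) ?_)
  simpa using hxy

end ConsZero

lemma le_swap_castSucc_succ_iff {k : ℕ} (j : Fin k) {i : Fin (k + 1)} (hi : i ≠ j.succ)
    (p : Fin (k + 1)) : i ≤ swap j.castSucc j.succ p ↔ i ≤ p := by
  have hi' : (i : ℕ) ≠ j + 1 := fun h => hi (Fin.ext (by simpa using h))
  rcases eq_or_ne p j.castSucc with rfl | hp₁
  · simp only [swap_apply_left, Fin.le_def, Fin.val_succ, Fin.val_castSucc]
    omega
  rcases eq_or_ne p j.succ with rfl | hp₂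
  · simp only [swap_apply_right, Fin.le_def, Fin.val_succ, Fin.val_castSucc]
    omega
  rw [swap_apply_of_ne_of_ne hp₁ hp₂]

/-- A flag `f = (e, s)` of order `N` encodes the chain of sign vectors
`f.vec 0 ⪰ f.vec 1 ⪰ ⋯ ⪰ f.vec (N - 1)`: the support of `f.vec i` is `e '' {i, …, N - 1}`, and
`s t` is the sign of every vector of the chain whose support contains `t`. -/
abbrev Flag (N : ℕ) := Perm (Fin N) × (Fin N → ℤˣ)

variable {N : ℕ}

namespace Flag

def vec (f : Flag N) (i : Fin N) : Fin N → ℤ :=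
  fun t => if i ≤ f.1.symm t then (f.2 t : ℤ) else 0

def labels (μ : (Fin N → ℤ) → ℤ) (f : Flag N) (s : Finset (Fin N)) : Multiset ℤ :=
  s.val.map fun i => μ (f.vec i)

lemma abs_vec_le (f : Flag N) (i t : Fin N) : |f.vec i t| ≤ 1 := by
  unfold vec
  split_ifs <;> simp [Int.abs_eq_natAbs]

lemma vec_ne_zero (f : Flag N) (i : Fin N) : f.vec i ≠ 0 := fun h => by
  have := congrFun h (f.1 i)
  simp only [vec, symm_apply_apply, le_refl, if_true, Pi.zero_apply] at this
  exact Units.ne_zero _ this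

lemma vec_eq_of_le (f : Flag N) {i j : Fin N} (hij : i ≤ j) {t : Fin N} (ht : f.vec j t ≠ 0) :
    f.vec i t = f.vec j t := by
  unfold vec at ht ⊢
  by_cases hj : j ≤ f.1.symm t
  · rw [if_pos hj, if_pos (hij.trans hj)]
  · rw [if_neg hj] at ht
    exact absurd rfl ht

lemma vec_neg (f : Flag N) (i : Fin N) : Flag.vec (f.1, -f.2) i = -f.vec i := by
  ext t
  simp only [vec, Pi.neg_apply]
  split_ifs <;> simp

lemma vec_update_of_ne_zero {k : ℕ} (f : Flag (k + 1)) (u : ℤˣ) {i : Fin (k + 1)} (hi : i ≠ 0) :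
    Flag.vec (f.1, update f.2 (f.1 0) u) i = f.vec i := by
  ext t
  unfold vec
  by_cases ht : t = f.1 0
  · subst ht
    simp [Fin.pos_iff_ne_zero.mpr hi |>.not_ge]
  · simp [update_of_ne ht]

lemma vec_mul_swap {k : ℕ} (f : Flag (k + 1)) (j : Fin k) {i : Fin (k + 1)} (hi : i ≠ j.succ) :
    Flag.vec (f.1 * swap j.castSucc j.succ, f.2) i = f.vec i := by
  ext t
  simp only [vec, Perm.mul_def, symm_trans_apply, symm_swap, le_swap_castSucc_succ_iff j hi]

/-- The chain of `g.consZero` is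
`Fin.cons 1 (g.vec 0) ⪰ Fin.cons 0 (g.vec 0) ⪰ ⋯ ⪰ Fin.cons 0 (g.vec (k - 1))`. -/
def consZero {k : ℕ} (g : Flag k) : Flag (k + 1) :=
  (Perm.decomposeFin.symm (0, g.1), Fin.cons 1 g.2)

lemma consZero_vec_succ {k : ℕ} (g : Flag k) (i : Fin k) :
    g.consZero.vec i.succ = Fin.cons 0 (g.vec i) := by
  have h₀ : g.consZero.1.symm 0 = 0 := by
    rw [symm_apply_eq]
    exact (Perm.decomposeFin_symm_apply_zero 0 g.1).symm
  have hsucc : ∀ t, g.consZero.1.symm t.succ = (g.1.symm t).succ := fun t => by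
    rw [symm_apply_eq, consZero, Perm.decomposeFin_symm_apply_succ, swap_self, refl_apply,
      apply_symm_apply]
  ext t
  refine Fin.cases ?_ (fun t => ?_) t
  · simp [vec, h₀, Fin.succ_ne_zero]
  · simp only [vec, hsucc, Fin.succ_le_succ_iff]
    simp [consZero, vec]

variable {μ : (Fin N → ℤ) → ℤ}

lemma labels_neg (hμ : IsAntipodal μ) (f : Flag N) (s : Finset (Fin N)) :
    Flag.labels μ (f.1, -f.2) s = (f.labels μ s).map Neg.neg := by
  simp only [labels, Multiset.map_map, comp_def, vec_neg]
  exact Multiset.map_congr rfl fun i _ => hμ _ (f.abs_vec_le i) (f.vec_ne_zero i)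

lemma add_ne_zero_of_mem_labels (hμ : HasNoComplementaryEdge μ) (f : Flag N)
    {s : Finset (Fin N)} {a b : ℤ} (ha : a ∈ f.labels μ s) (hb : b ∈ f.labels μ s) :
    a + b ≠ 0 := by
  obtain ⟨i, -, rfl⟩ := Multiset.mem_map.mp ha
  obtain ⟨j, -, rfl⟩ := Multiset.mem_map.mp hb
  have key : ∀ i j : Fin N, i ≤ j → μ (f.vec j) + μ (f.vec i) ≠ 0 := fun i j hij =>
    hμ _ _ (f.abs_vec_le j) (f.vec_ne_zero j) (f.abs_vec_le i) (f.vec_ne_zero i)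
      fun _ ht => f.vec_eq_of_le hij ht
  rcases le_total i j with hij | hij
  · rw [add_comm]
    exact key i j hij
  · exact key j i hij

lemma labels_ne_zero {k : ℕ} (μ : (Fin (k + 1) → ℤ) → ℤ) (f : Flag (k + 1)) :
    f.labels μ univ ≠ 0 := by
  simp [labels]

lemma labels_erase (μ : (Fin N → ℤ) → ℤ) (f : Flag N) (j : Fin N) :
    f.labels μ (univ.erase j) = (f.labels μ univ).erase (μ (f.vec j)) := by
  rw [labels, erase_val, Multiset.map_erase_of_mem _ _ (mem_univ j)]
  rfl

lemma labels_congr {f g : Flag N} {s : Finset (Fin N)} (h : ∀ i ∈ s, f.vec i = g.vec i) :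
    f.labels μ s = g.labels μ s :=
  Multiset.map_congr rfl fun i hi => by rw [h i hi]

lemma consZero_labels_erase_zero {k : ℕ} (μ : (Fin (k + 1) → ℤ) → ℤ) (g : Flag k) :
    g.consZero.labels μ (univ.erase 0) = g.labels (fun x => μ (Fin.cons 0 x)) univ := by
  rw [Fin.univ_succ, erase_cons, labels, labels, map_val, Multiset.map_map]
  exact Multiset.map_congr rfl fun i _ => by simp [consZero_vec_succ]

end Flag

lemma sum_eq_zero_of_involution {α R : Type*} [Semiring R] [CharP R 2] {s : Finset α}
    {w : α → R} (g : α → α) (hg : ∀ a ∈ s, g a ∈ s) (hgg : ∀ a ∈ s, g (g a) = a)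
    (hne : ∀ a ∈ s, g a ≠ a) (hw : ∀ a ∈ s, w (g a) = w a) : ∑ a ∈ s, w a = 0 :=
  sum_involution (fun a _ => g a) (fun a ha => by rw [hw a ha, CharTwo.add_self_eq_zero])
    (fun a ha _ => hne a ha) hg hgg

def alternatingFlags (μ : (Fin N → ℤ) → ℤ) : Finset (Flag N) :=
  {f | IsAlternating 1 (f.labels μ univ)}

section Step

variable {k : ℕ} {μ : (Fin (k + 1) → ℤ) → ℤ}

lemma card_alternatingFlags_eq_sum (hμ : IsAntipodal μ) :
    (#(alternatingFlags μ) : ZMod 2) = ∑ f : Flag (k + 1) with f.2 0 = 1,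
      if IsAlternating 1 (f.labels μ univ) ∨ IsAlternating (-1) (f.labels μ univ)
      then 1 else 0 := by
  have hneg : ∑ f : Flag (k + 1) with ¬ f.2 0 = 1,
      (if IsAlternating 1 (f.labels μ univ) then (1 : ZMod 2) else 0) =
      ∑ f : Flag (k + 1) with f.2 0 = 1, if IsAlternating (-1) (f.labels μ univ) then 1 else 0 := by
    refine sum_nbij' (fun f => (f.1, -f.2)) (fun f => (f.1, -f.2)) ?_ ?_ ?_ ?_ ?_
    · intro f hf
      rcases Int.units_eq_one_or (f.2 0) with h | h <;> simp_all
    · intro f hf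
      simp_all
    · simp
    · simp
    · intro f _
      simp only [Flag.labels_neg hμ, isAlternating_map_neg, neg_neg]
  rw [alternatingFlags, natCast_card_filter, ← sum_filter_add_sum_filter_not _ fun f => f.2 0 = 1,
    hneg, ← sum_add_distrib]
  refine sum_congr rfl fun f _ => ?_
  have := not_isAlternating_one_and_neg_one (Flag.labels_ne_zero μ f)
  split_ifs <;> simp_all

lemma sum_isAlternating_labels_erase (hμ : HasNoComplementaryEdge μ) (f : Flag (k + 1)) :
    ∑ j, (if IsAlternating 1 (f.labels μ (univ.erase j)) then (1 : ZMod 2) else 0) =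
      if IsAlternating 1 (f.labels μ univ) ∨ IsAlternating (-1) (f.labels μ univ)
      then 1 else 0 := by
  rw [← sum_map_isAlternating_erase _ (Flag.labels_ne_zero μ f)
    fun a ha b hb => Flag.add_ne_zero_of_mem_labels hμ f ha hb]
  simp only [Flag.labels_erase, sum_eq_multiset_sum]
  rw [Flag.labels, Multiset.map_map]
  rfl

lemma sum_isAlternating_labels_erase_succ (j : Fin k) :
    ∑ f : Flag (k + 1) with f.2 0 = 1,
      (if IsAlternating 1 (f.labels μ (univ.erase j.succ)) then (1 : ZMod 2) else 0) = 0 := by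
  refine sum_eq_zero_of_involution (fun f => (f.1 * swap j.castSucc j.succ, f.2))
    (by simp) (by simp [mul_assoc]) (fun f _ h => ?_) (fun f _ => ?_)
  · have := congrArg Prod.fst h
    simp only [mul_eq_left, swap_eq_one_iff] at this
    exact (Fin.castSucc_lt_succ (i := j)).ne this
  · rw [Flag.labels_congr fun i hi => Flag.vec_mul_swap f j (ne_of_mem_erase hi)]

lemma sum_isAlternating_labels_erase_zero :
    ∑ f : Flag (k + 1) with f.2 0 = 1,
      (if IsAlternating 1 (f.labels μ (univ.erase 0)) then (1 : ZMod 2) else 0) =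
    ∑ f : Flag (k + 1) with f.2 0 = 1 ∧ f.1 0 = 0,
      if IsAlternating 1 (f.labels μ (univ.erase 0)) then 1 else 0 := by
  rw [← sum_filter_add_sum_filter_not _ fun f => f.1 0 = 0, filter_filter, filter_filter,
    add_eq_left]
  refine sum_eq_zero_of_involution (fun f => (f.1, update f.2 (f.1 0) (-f.2 (f.1 0))))
    (fun f hf => ?_) (fun f _ => ?_) (fun f _ h => ?_) (fun f _ => ?_)
  · simp only [mem_filter, mem_univ, true_and] at hf ⊢
    rwa [update_of_ne (Ne.symm hf.2)]
  · simp
  · have := congrFun (congrArg Prod.snd h) (f.1 0)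
    exact units_ne_neg_self (f.2 (f.1 0)) (by simpa using this.symm)
  · rw [Flag.labels_congr fun i hi => Flag.vec_update_of_ne_zero f _ (ne_of_mem_erase hi)]

lemma sum_isAlternating_labels_erase_zero_eq_card :
    ∑ f : Flag (k + 1) with f.2 0 = 1 ∧ f.1 0 = 0,
      (if IsAlternating 1 (f.labels μ (univ.erase 0)) then (1 : ZMod 2) else 0) =
    #(alternatingFlags fun x : Fin k → ℤ => μ (Fin.cons 0 x)) := by
  rw [alternatingFlags, natCast_card_filter]
  symm
  refine sum_nbij' Flag.consZero (fun f => ((Perm.decomposeFin f.1).2, Fin.tail f.2))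
    (fun _ _ => by simp [Flag.consZero]) (fun _ _ => mem_univ _)
    (fun _ _ => by simp [Flag.consZero])
    (fun f hf => ?_) (fun g _ => by rw [Flag.consZero_labels_erase_zero])
  simp only [mem_filter, mem_univ, true_and] at hf
  have h₀ : (Perm.decomposeFin f.1).1 = 0 := by
    simpa [hf.2] using (Perm.decomposeFin_symm_apply_zero (Perm.decomposeFin f.1).1
      (Perm.decomposeFin f.1).2).symm
  refine Prod.ext ?_ ?_
  · rw [Flag.consZero, ← h₀, Prod.mk.eta, symm_apply_apply]
  · rw [Flag.consZero, ← hf.1, Fin.cons_self_tail]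

theorem card_alternatingFlags_succ (hanti : IsAntipodal μ) (hcomp : HasNoComplementaryEdge μ) :
    (#(alternatingFlags μ) : ZMod 2) =
      #(alternatingFlags fun x : Fin k → ℤ => μ (Fin.cons 0 x)) := by
  rw [card_alternatingFlags_eq_sum hanti]
  simp_rw [← sum_isAlternating_labels_erase hcomp]
  rw [sum_comm, Fin.sum_univ_succ, sum_eq_zero fun j _ => sum_isAlternating_labels_erase_succ j,
    add_zero, sum_isAlternating_labels_erase_zero, sum_isAlternating_labels_erase_zero_eq_card]

end Step

theorem odd_card_alternatingFlags :
    ∀ {N : ℕ} {μ : (Fin N → ℤ) → ℤ}, IsAntipodal μ → HasNoComplementaryEdge μ →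
      Odd #(alternatingFlags μ)
  | 0, _, _, _ => by simp [alternatingFlags, Flag.labels]
  | _ + 1, _, hanti, hcomp => by
    rw [← ZMod.natCast_eq_one_iff_odd, card_alternatingFlags_succ hanti hcomp,
      ZMod.natCast_eq_one_iff_odd]
    exact odd_card_alternatingFlags hanti.comp_cons_zero hcomp.comp_cons_zero

end OctahedralTucker

theorem octahedral_tucker_general (n m : ℕ)
    (lam : (Fin n → ℤ) → ℤ)
    (hrange : ∀ x : Fin n → ℤ, (∀ i, |x i| ≤ 1) → x ≠ 0 →
      lam x ≠ 0 ∧ |lam x| ≤ (m : ℤ))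
    (hanti : ∀ x : Fin n → ℤ, (∀ i, |x i| ≤ 1) → x ≠ 0 → lam (-x) = -lam x)
    (hcomp : ∀ x y : Fin n → ℤ, (∀ i, |x i| ≤ 1) → x ≠ 0 →
      (∀ i, |y i| ≤ 1) → y ≠ 0 → (∀ i, x i ≠ 0 → y i = x i) →
      lam x + lam y ≠ 0) :
    n ≤ m := by
  obtain ⟨f, hf⟩ :=
    card_pos.mp (OctahedralTucker.odd_card_alternatingFlags (μ := lam) hanti hcomp).pos
  have hbound : ∀ a ∈ f.labels lam univ, |a| ≤ m := by
    simp only [OctahedralTucker.Flag.labels, Multiset.mem_map, mem_val, mem_univ, true_and]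
    rintro _ ⟨i, rfl⟩
    exact (hrange _ (f.abs_vec_le i) (f.vec_ne_zero i)).2
  simpa [OctahedralTucker.Flag.labels] using (mem_filter.mp hf).2.card_le one_ne_zero hbound

/-- Octahedral Tucker lemma: if `λ` maps the nonzero sign vectors of `{-1,0,1}^n` to
`{±1, …, ±m}` antipodally (`λ(-x) = -λ(x)`) and there is no pair `x ⪯ y` with
`λ(x) + λ(y) = 0`, then `n ≤ m`. -/
theorem octahedral_tucker (n m : ℕ) (hn : 1 ≤ n) (hm : 1 ≤ m)
    (lam : (Fin n → ℤ) → ℤ)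
    (hrange : ∀ x : Fin n → ℤ, (∀ i, |x i| ≤ 1) → x ≠ 0 →
      lam x ≠ 0 ∧ |lam x| ≤ (m : ℤ))
    (hanti : ∀ x : Fin n → ℤ, (∀ i, |x i| ≤ 1) → x ≠ 0 → lam (-x) = -lam x)
    (hcomp : ∀ x y : Fin n → ℤ, (∀ i, |x i| ≤ 1) → x ≠ 0 →
      (∀ i, |y i| ≤ 1) → y ≠ 0 → (∀ i, x i ≠ 0 → y i = x i) →
      lam x + lam y ≠ 0) :
    n ≤ m :=
  octahedral_tucker_general n m lam hrange hanti hcomp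
end

section
/- Von Neumann's minimax theorem: for every real m × n matrix A, max_{x ∈ Δ_{n−1}} min_{y ∈ Δ_{m−1}} xᵀAy = min_{y ∈ Δ_{m−1}} max_{x ∈ Δ_{n−1}} xᵀAy, where both the outer maximum/minimum and the inner minima/maxima are attained. -/
/-- The bilinear payoff `xᵀAy = ∑_{i,j} x_j A_{ij} y_i` of a zero-sum matrix game. -/
noncomputable def matrixPay {m n : ℕ} (A : Matrix (Fin m) (Fin n) ℝ)
    (x : Fin n → ℝ) (y : Fin m → ℝ) : ℝ :=
  ∑ i, ∑ j, x j * A i j * y i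

/-!
The payoff is bilinear, so it is continuous and both convex and concave in each variable, and the
strategy sets are nonempty compact convex simplices. Sion's minimax theorem therefore yields a
saddle point, whose payoff is both the max-min and the min-max value. The inner extrema are
attained by compactness.
-/

section SaddlePoint

variable {E F β : Type*} [Preorder β] {X : Set E} {Y : Set F} {f : E → F → β} {a : E} {b : F}

theorem IsSaddlePointOn.isGreatest_setOf_isLeast (h : IsSaddlePointOn X Y f a b)
    (ha : a ∈ X) (hb : b ∈ Y) :
    IsGreatest {w | ∃ y ∈ Y, IsLeast {w' | ∃ x ∈ X, w' = f x y} w} (f a b) := by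
  refine ⟨⟨b, hb, ⟨a, ha, rfl⟩, ?_⟩, ?_⟩
  · rintro _ ⟨x, hx, rfl⟩
    exact h x hx b hb
  · rintro w ⟨y, hy, hw⟩
    exact (hw.2 ⟨a, ha, rfl⟩).trans (h a ha y hy)

theorem IsSaddlePointOn.isLeast_setOf_isGreatest (h : IsSaddlePointOn X Y f a b)
    (ha : a ∈ X) (hb : b ∈ Y) :
    IsLeast {w | ∃ x ∈ X, IsGreatest {w' | ∃ y ∈ Y, w' = f x y} w} (f a b) := by
  refine ⟨⟨a, ha, ⟨b, hb, rfl⟩, ?_⟩, ?_⟩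
  · rintro _ ⟨y, hy, rfl⟩
    exact h a ha y hy
  · rintro w ⟨x, hx, hw⟩
    exact (h x hx b hb).trans (hw.2 ⟨b, hb, rfl⟩)

end SaddlePoint

section Compact

variable {α β : Type*} [TopologicalSpace α] [LinearOrder β] [TopologicalSpace β]
  {s : Set α} {g : α → β}

theorem IsCompact.exists_isLeast_setOf_eq [ClosedIicTopology β] (hs : IsCompact s)
    (hne : s.Nonempty) (hg : ContinuousOn g s) :
    ∃ a ∈ s, IsLeast {w | ∃ a' ∈ s, w = g a'} (g a) := by
  obtain ⟨a, ha, hmin⟩ := hs.exists_isMinOn hne hg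
  refine ⟨a, ha, ⟨a, ha, rfl⟩, ?_⟩
  rintro _ ⟨a', ha', rfl⟩
  exact hmin ha'

theorem IsCompact.exists_isGreatest_setOf_eq [ClosedIciTopology β] (hs : IsCompact s)
    (hne : s.Nonempty) (hg : ContinuousOn g s) :
    ∃ a ∈ s, IsGreatest {w | ∃ a' ∈ s, w = g a'} (g a) := by
  obtain ⟨a, ha, hmax⟩ := hs.exists_isMaxOn hne hg
  refine ⟨a, ha, ⟨a, ha, rfl⟩, ?_⟩
  rintro _ ⟨a', ha', rfl⟩
  exact hmax ha'

end Compact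

section Bilinear

variable {E F : Type*}
  [AddCommGroup E] [Module ℝ E] [TopologicalSpace E] [IsTopologicalAddGroup E]
  [ContinuousSMul ℝ E] [T2Space E] [FiniteDimensional ℝ E]
  [AddCommGroup F] [Module ℝ F] [TopologicalSpace F] [IsTopologicalAddGroup F]
  [ContinuousSMul ℝ F] [T2Space F] [FiniteDimensional ℝ F]

theorem LinearMap.exists_isSaddlePointOn (B : E →ₗ[ℝ] F →ₗ[ℝ] ℝ) {X : Set E} {Y : Set F}
    (hXne : X.Nonempty) (hXc : Convex ℝ X) (hXk : IsCompact X)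
    (hYne : Y.Nonempty) (hYc : Convex ℝ Y) (hYk : IsCompact Y) :
    ∃ a ∈ X, ∃ b ∈ Y, IsSaddlePointOn X Y (fun x y => B x y) a b :=
  Sion.exists_isSaddlePointOn hXne hXc hXk
    (fun y _ =>
      (B.flip y).continuous_of_finiteDimensional.lowerSemicontinuous.lowerSemicontinuousOn X)
    (fun y _ => ((B.flip y).convexOn hXc).quasiconvexOn)
    hYc hYne hYk
    (fun x _ =>
      (B x).continuous_of_finiteDimensional.upperSemicontinuous.upperSemicontinuousOn Y)
    (fun x _ => ((B x).concaveOn hYc).quasiconcaveOn)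

end Bilinear

theorem matrixPay_eq_toLinearMap₂' {m n : ℕ} (A : Matrix (Fin m) (Fin n) ℝ)
    (x : Fin n → ℝ) (y : Fin m → ℝ) :
    matrixPay A x y = Matrix.toLinearMap₂' ℝ A y x := by
  rw [Matrix.toLinearMap₂'_apply, matrixPay]
  simp only [smul_eq_mul]
  exact Finset.sum_congr rfl fun i _ => Finset.sum_congr rfl fun j _ => by ring

/-- Von Neumann's minimax theorem: for every real `m × n` matrix `A`,
`max_{x ∈ Δ_{n-1}} min_{y ∈ Δ_{m-1}} xᵀAy = min_{y ∈ Δ_{m-1}} max_{x ∈ Δ_{n-1}} xᵀAy`,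
with all inner minima/maxima and both outer extrema attained. -/
theorem von_neumann_minimax (m n : ℕ) (hm : 1 ≤ m) (hn : 1 ≤ n)
    (A : Matrix (Fin m) (Fin n) ℝ) :
    ∃ v : ℝ,
      (∀ x ∈ stdSimplex ℝ (Fin n), ∃ y ∈ stdSimplex ℝ (Fin m),
        IsLeast {w | ∃ y' ∈ stdSimplex ℝ (Fin m), w = matrixPay A x y'} (matrixPay A x y)) ∧
      (∀ y ∈ stdSimplex ℝ (Fin m), ∃ x ∈ stdSimplex ℝ (Fin n),
        IsGreatest {w | ∃ x' ∈ stdSimplex ℝ (Fin n), w = matrixPay A x' y} (matrixPay A x y)) ∧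
      IsGreatest {w | ∃ x ∈ stdSimplex ℝ (Fin n),
        IsLeast {w' | ∃ y ∈ stdSimplex ℝ (Fin m), w' = matrixPay A x y} w} v ∧
      IsLeast {w | ∃ y ∈ stdSimplex ℝ (Fin m),
        IsGreatest {w' | ∃ x ∈ stdSimplex ℝ (Fin n), w' = matrixPay A x y} w} v := by
  have hΔm : (stdSimplex ℝ (Fin m)).Nonempty := ⟨_, single_mem_stdSimplex ℝ ⟨0, hm⟩⟩
  have hΔn : (stdSimplex ℝ (Fin n)).Nonempty := ⟨_, single_mem_stdSimplex ℝ ⟨0, hn⟩⟩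
  set B : (Fin m → ℝ) →ₗ[ℝ] (Fin n → ℝ) →ₗ[ℝ] ℝ := Matrix.toLinearMap₂' ℝ A
  simp only [matrixPay_eq_toLinearMap₂']
  obtain ⟨y₀, hy₀, x₀, hx₀, hsaddle⟩ := B.exists_isSaddlePointOn
    hΔm (convex_stdSimplex ℝ _) (isCompact_stdSimplex ℝ _)
    hΔn (convex_stdSimplex ℝ _) (isCompact_stdSimplex ℝ _)
  refine ⟨B y₀ x₀, fun x _ => ?_, fun y _ => ?_, hsaddle.isGreatest_setOf_isLeast hy₀ hx₀,
    hsaddle.isLeast_setOf_isGreatest hy₀ hx₀⟩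
  · exact (isCompact_stdSimplex ℝ _).exists_isLeast_setOf_eq hΔm
      (B.flip x).continuous_of_finiteDimensional.continuousOn
  · exact (isCompact_stdSimplex ℝ _).exists_isGreatest_setOf_eq hΔn
      (B y).continuous_of_finiteDimensional.continuousOn
end

section
/- Centerpoint theorem: for every finite set P of n points in ℝ^d there exists a point q ∈ ℝ^d such that every closed halfspace of ℝ^d containing q contains at least ⌈n/(d+1)⌉ points of P. -/
/- Centerpoint theorem: for every finite set `P` of points in `ℝ^d` there is a point `q`
such that every closed halfspace containing `q` contains at least `⌈|P|/(d+1)⌉` points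
of `P`. -/
open scoped Classical in
theorem centerpoint (d : ℕ) (hd : 1 ≤ d) (P : Finset (Fin d → ℝ)) :
    ∃ q : Fin d → ℝ, ∀ (a : Fin d → ℝ) (b : ℝ), a ≠ 0 → b ≤ ∑ i, a i * q i →
      (⌈(P.card : ℚ) / (d + 1)⌉ : ℤ) ≤
        ((P.filter fun p => b ≤ ∑ i, a i * p i).card : ℤ) := by
  set n := P.card with hn
  set T : ℤ := ⌈(n : ℚ) / (d + 1)⌉ with hT
  by_cases hT0 : T ≤ 0
  · exact ⟨0, fun a b _ _ => hT0.trans (by positivity)⟩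
  push_neg at hT0
  set t : ℕ := T.toNat with ht
  have htT : (t : ℤ) = T := Int.toNat_of_nonneg hT0.le
  -- key counting inequality: (d+1) * (T-1) < n
  have hkey : ((d : ℤ) + 1) * (T - 1) < n := by
    have h1 : ((T : ℚ) - 1) < (n : ℚ) / (d + 1) := by
      have := Int.ceil_lt_add_one ((n : ℚ) / (d + 1))
      push_cast at this ⊢
      linarith [this]
    have hd1 : (0 : ℚ) < (d : ℚ) + 1 := by positivity
    rw [lt_div_iff₀ hd1] at h1
    have : ((d : ℚ) + 1) * ((T : ℚ) - 1) < (n : ℚ) := by nlinarith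
    exact_mod_cast this
  -- the family of big subsets of P
  set s : Finset (Finset (Fin d → ℝ)) :=
    P.powerset.filter (fun S => n + 1 ≤ S.card + t) with hs
  have hhelly : (⋂ S ∈ s, convexHull ℝ (S : Set (Fin d → ℝ))).Nonempty := by
    apply Convex.helly_theorem' (𝕜 := ℝ)
    · exact fun S _ => convex_convexHull ℝ _
    · intro I hI hIcard
      rw [Module.finrank_fin_fun] at hIcard
      -- find a point of P in every S ∈ I
      set B : Finset (Fin d → ℝ) := I.biUnion (fun S => P \ S) with hB
      have hBcard : B.card < n := by
        have h1 : B.card ≤ ∑ S ∈ I, (P \ S).card := Finset.card_biUnion_le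
        have h2 : ∀ S ∈ I, (P \ S).card ≤ t - 1 := by
          intro S hSI
          have hSs := hI hSI
          rw [hs, Finset.mem_filter, Finset.mem_powerset] at hSs
          have hSle : S.card ≤ n := Finset.card_le_card hSs.1
          have hcs : (P \ S).card = n - S.card := by
            rw [Finset.card_sdiff_of_subset hSs.1, hn]
          omega
        have h3 : ∑ S ∈ I, (P \ S).card ≤ I.card * (t - 1) := by
          calc ∑ S ∈ I, (P \ S).card ≤ ∑ _S ∈ I, (t - 1) :=
                Finset.sum_le_sum h2
            _ = I.card * (t - 1) := by rw [Finset.sum_const, smul_eq_mul]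
        have h4 : I.card * (t - 1) < n := by
          have : ((I.card : ℤ)) * ((t : ℤ) - 1) < n := by
            calc ((I.card : ℤ)) * ((t : ℤ) - 1)
                ≤ ((d : ℤ) + 1) * ((t : ℤ) - 1) := by
                  apply mul_le_mul_of_nonneg_right
                  · exact_mod_cast hIcard
                  · omega
              _ < n := by rw [htT]; exact hkey
          have ht1 : 1 ≤ t := by omega
          zify [ht1]
          exact this
        omega
      have hBP : ∃ p ∈ P, p ∉ B := by
        by_contra h
        push_neg at h
        have : P ⊆ B := h
        have := Finset.card_le_card this
        omega
      obtain ⟨p, hpP, hpB⟩ := hBP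
      refine ⟨p, ?_⟩
      rw [Set.mem_iInter₂]
      intro S hSI
      apply subset_convexHull
      simp only [Finset.mem_coe]
      by_contra hpS
      exact hpB (Finset.mem_biUnion.mpr ⟨S, hSI, Finset.mem_sdiff.mpr ⟨hpP, hpS⟩⟩)
  obtain ⟨q, hq⟩ := hhelly
  rw [Set.mem_iInter₂] at hq
  refine ⟨q, fun a b _ hbq => ?_⟩
  by_contra hlt
  push_neg at hlt
  set H : Finset (Fin d → ℝ) := P.filter (fun p => b ≤ ∑ i, a i * p i) with hH
  have hHcard : (H.card : ℤ) ≤ T - 1 := by omega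
  have hHt : H.card + 1 ≤ t := by omega
  -- S = P \ H is a big subset
  have hSs : P \ H ∈ s := by
    rw [hs, Finset.mem_filter, Finset.mem_powerset]
    refine ⟨Finset.sdiff_subset, ?_⟩
    have : H ⊆ P := Finset.filter_subset _ _
    rw [Finset.card_sdiff_of_subset this]
    have := Finset.card_le_card this
    omega
  have hqS := hq (P \ H) hSs
  -- P \ H lies in the open halfspace ⟨a, x⟩ < b, which is convex
  have hconv : Convex ℝ {x : Fin d → ℝ | ∑ i, a i * x i < b} := by
    have hlm : IsLinearMap ℝ (fun x : Fin d → ℝ => ∑ i, a i * x i) := by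
      constructor
      · intro x y
        simp [mul_add, Finset.sum_add_distrib]
      · intro c x
        simp [Finset.mul_sum, mul_comm, mul_assoc, mul_left_comm]
    exact convex_halfSpace_lt hlm b
  have hsub : (↑(P \ H) : Set (Fin d → ℝ)) ⊆ {x : Fin d → ℝ | ∑ i, a i * x i < b} := by
    intro x hx
    simp only [Finset.coe_sdiff, Set.mem_diff, Finset.mem_coe] at hx
    obtain ⟨hxP, hxH⟩ := hx
    simp only [Set.mem_setOf_eq]
    by_contra h
    push_neg at h
    exact hxH (Finset.mem_filter.mpr ⟨hxP, h⟩)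
  have := convexHull_min hsub hconv hqS
  simp only [Set.mem_setOf_eq] at this
  linarith
end
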